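/- arXiv:2310.12170 — 5 statements merged into one kernel-verified Lean document; each statement's English description precedes it below -/
import Mathlib

section
/- Let d ≥ 1 be an integer, α ∈ (0, d), and 1 < q ≤ p with p ≤ d. Let b : ℝ^d → [0,∞) be measurable and A ≥ 0 satisfy ∫_B b^p dx ≤ A^p ρ^{d - pα} for every ρ > 0 and every ball B of radius ρ. Then pointwise on ℝ^d one has R_α(b^q) ≤ N A (𝕄(b^q))^{1 - 1/q}, where N depends only on α, d, q, p. -/
/-
Hedberg's argument. Cut the kernel `|y|^(α-d)` into the dyadic annuli `δ 2^k ≤ |y| < δ 2^(k+1)`,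
`k ∈ ℤ`; on each annulus the kernel is at most `(δ 2^k)^(α-d)` and the mass of `g = b^q` is at
most its integral over the ball of radius `δ 2^(k+1)`. Below the scale `δ` that ball integral is
bounded by `𝕄g(x)` times the volume, which sums to `𝕄g(x) δ^α`; above it, Hölder turns the Morrey
condition on `b^p` into `∫_B b^q ≤ c A^q ρ^(d-qα)`, which sums (as `qα > α`) to `A^q δ^(α-qα)`.
Choosing `δ^α = A (𝕄g(x))^(-1/q)` balances the two terms at `A (𝕄g(x))^(1-1/q)`.
-/

open MeasureTheory Metric ENNReal

/-- Riesz potential of an `ℝ≥0∞`-valued function: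
`R_α g (x) = ∫ g(x+y) |y|^(α-d) dy`. -/
noncomputable def riesz {d : ℕ} (α : ℝ) (g : EuclideanSpace ℝ (Fin d) → ℝ≥0∞)
    (x : EuclideanSpace ℝ (Fin d)) : ℝ≥0∞ :=
  ∫⁻ y, g (x + y) * ENNReal.ofReal (‖y‖ ^ (α - (d : ℝ)))

/-- Riesz potential of a real-valued function. -/
noncomputable def rieszR {d : ℕ} (α : ℝ) (f : EuclideanSpace ℝ (Fin d) → ℝ)
    (x : EuclideanSpace ℝ (Fin d)) : ℝ :=
  ∫ y, f (x + y) * ‖y‖ ^ (α - (d : ℝ))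

/-- Hardy–Littlewood maximal function: sup over balls containing `x`
of the average of `g` over the ball. -/
noncomputable def maxFun {d : ℕ} (g : EuclideanSpace ℝ (Fin d) → ℝ≥0∞)
    (x : EuclideanSpace ℝ (Fin d)) : ℝ≥0∞ :=
  ⨆ (z : EuclideanSpace ℝ (Fin d)) (r : ℝ) (_ : x ∈ ball z r),
    (∫⁻ y in ball z r, g y) / volume (ball z r)

section Annuli

variable {E : Type*} [NormedAddCommGroup E] [MeasurableSpace E] {μ : Measure E}

theorem setLIntegral_annulus_le [BorelSpace E] [μ.IsAddLeftInvariant] {β a r : ℝ} (hβ : β ≤ 0)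
    (ha : 0 < a) (g : E → ℝ≥0∞) (x : E) :
    ∫⁻ y in {y | ‖y‖ ∈ Set.Ico a r}, g (x + y) * ENNReal.ofReal (‖y‖ ^ β) ∂μ ≤
      ENNReal.ofReal (a ^ β) * ∫⁻ z in ball x r, g z ∂μ := by
  have hS : MeasurableSet {y : E | ‖y‖ ∈ Set.Ico a r} := measurable_norm measurableSet_Ico
  calc ∫⁻ y in {y | ‖y‖ ∈ Set.Ico a r}, g (x + y) * ENNReal.ofReal (‖y‖ ^ β) ∂μ
      ≤ ∫⁻ y in {y | ‖y‖ ∈ Set.Ico a r}, ENNReal.ofReal (a ^ β) * g (x + y) ∂μ := by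
        refine lintegral_mono_ae ((ae_restrict_iff' hS).2 (.of_forall fun y hy => ?_))
        rw [mul_comm]
        gcongr ?_ * _
        exact ofReal_le_ofReal (Real.rpow_le_rpow_of_nonpos ha hy.1 hβ)
    _ = ENNReal.ofReal (a ^ β) * ∫⁻ y in {y | ‖y‖ ∈ Set.Ico a r}, g (x + y) ∂μ :=
        lintegral_const_mul' _ _ ofReal_ne_top
    _ ≤ ENNReal.ofReal (a ^ β) * ∫⁻ y in (x + ·) ⁻¹' ball x r, g (x + y) ∂μ := by
        gcongr
        intro y hy
        simpa [dist_eq_norm] using hy.2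
    _ = ENNReal.ofReal (a ^ β) * ∫⁻ z in ball x r, g z ∂μ := by
        rw [(measurePreserving_add_left μ x).setLIntegral_comp_preimage_emb
          (MeasurableEquiv.addLeft x).measurableEmbedding]

theorem lintegral_le_tsum_annulus [BorelSpace E] [μ.IsAddLeftInvariant] {β δ : ℝ} (hβ : β < 0)
    (hδ : 0 < δ) (g : E → ℝ≥0∞) (x : E) :
    ∫⁻ y, g (x + y) * ENNReal.ofReal (‖y‖ ^ β) ∂μ ≤
      ∑' k : ℤ, ENNReal.ofReal ((δ * 2 ^ k) ^ β) *
        ∫⁻ z in ball x (δ * 2 ^ (k + 1)), g z ∂μ := by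
  set F : E → ℝ≥0∞ := fun y => g (x + y) * ENNReal.ofReal (‖y‖ ^ β)
  set S : ℤ → Set E := fun k => {y | ‖y‖ ∈ Set.Ico (δ * 2 ^ k) (δ * 2 ^ (k + 1))}
  have hcover : Set.univ ⊆ {0} ∪ ⋃ k, S k := by
    intro y _
    rcases eq_or_ne y 0 with rfl | hy
    · exact Or.inl rfl
    obtain ⟨k, hk₁, hk₂⟩ := exists_mem_Ico_zpow (div_pos (norm_pos_iff.2 hy) hδ) one_lt_two
    refine Or.inr (Set.mem_iUnion.2 ⟨k, ?_, ?_⟩)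
    · rw [mul_comm]; exact (le_div_iff₀ hδ).1 hk₁
    · rw [mul_comm]; exact (div_lt_iff₀ hδ).1 hk₂
  -- the origin contributes nothing, since `0 ^ β = 0` for `β ≠ 0`
  have hzero : ∫⁻ y in {0}, F y ∂μ = 0 := by
    simp [F, Real.zero_rpow hβ.ne]
  calc ∫⁻ y, F y ∂μ = ∫⁻ y in Set.univ, F y ∂μ := (setLIntegral_univ F).symm
    _ ≤ ∫⁻ y in {0} ∪ ⋃ k, S k, F y ∂μ := lintegral_mono_set hcover
    _ ≤ ∫⁻ y in {0}, F y ∂μ + ∫⁻ y in ⋃ k, S k, F y ∂μ := lintegral_union_le F _ _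
    _ ≤ ∑' k, ∫⁻ y in S k, F y ∂μ := by
        rw [hzero, zero_add]
        exact lintegral_iUnion_le S F
    _ ≤ _ := ENNReal.tsum_le_tsum fun k => setLIntegral_annulus_le hβ.le (by positivity) g x

theorem ofReal_rpow_mul_lintegral_ball_le {β s δ : ℝ} {C : ℝ≥0∞} {g : E → ℝ≥0∞} {x : E}
    (hδ : 0 < δ) (hg : ∀ r > 0, ∫⁻ z in ball x r, g z ∂μ ≤ C * ENNReal.ofReal (r ^ s))
    (k : ℤ) :
    ENNReal.ofReal ((δ * 2 ^ k) ^ β) * ∫⁻ z in ball x (δ * 2 ^ (k + 1)), g z ∂μ ≤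
      C * ENNReal.ofReal (2 ^ s * δ ^ (β + s) * (2 ^ (β + s)) ^ k) := by
  have hu : 0 < δ * 2 ^ k := by positivity
  have hscale : (δ * 2 ^ k) ^ β * (δ * 2 ^ (k + 1)) ^ s =
      2 ^ s * δ ^ (β + s) * (2 ^ (β + s)) ^ k := by
    calc (δ * 2 ^ k) ^ β * (δ * 2 ^ (k + 1)) ^ s = 2 ^ s * (δ * 2 ^ k) ^ (β + s) := by
          rw [zpow_add_one₀ two_ne_zero, show δ * (2 ^ k * 2) = 2 * (δ * 2 ^ k) by ring,
            Real.mul_rpow zero_le_two hu.le, Real.rpow_add hu]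
          ring
      _ = 2 ^ s * δ ^ (β + s) * (2 ^ (β + s)) ^ k := by
          rw [Real.mul_rpow hδ.le (by positivity), Real.rpow_zpow_comm zero_le_two, mul_assoc]
  calc ENNReal.ofReal ((δ * 2 ^ k) ^ β) * ∫⁻ z in ball x (δ * 2 ^ (k + 1)), g z ∂μ
      ≤ ENNReal.ofReal ((δ * 2 ^ k) ^ β) *
          (C * ENNReal.ofReal ((δ * 2 ^ (k + 1)) ^ s)) := by
        gcongr
        exact hg _ (by positivity)
    _ = C * ENNReal.ofReal (2 ^ s * δ ^ (β + s) * (2 ^ (β + s)) ^ k) := by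
        rw [← hscale, ENNReal.ofReal_mul (by positivity)]
        ring

theorem tsum_ofReal_mul_pow {c t : ℝ} (hc : 0 ≤ c) (ht₀ : 0 ≤ t) (ht₁ : t < 1) :
    ∑' n : ℕ, ENNReal.ofReal (c * t ^ n) = ENNReal.ofReal (c / (1 - t)) := by
  rw [← ENNReal.ofReal_tsum_of_nonneg (fun n => by positivity)
    ((summable_geometric_of_lt_one ht₀ ht₁).mul_left c), tsum_mul_left,
    tsum_geometric_of_lt_one ht₀ ht₁, div_eq_mul_inv]

theorem tsum_annulus_nonneg_le {β s δ : ℝ} {C : ℝ≥0∞} {g : E → ℝ≥0∞} {x : E}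
    (hδ : 0 < δ) (hγ : β + s < 0)
    (hg : ∀ r > 0, ∫⁻ z in ball x r, g z ∂μ ≤ C * ENNReal.ofReal (r ^ s)) :
    ∑' n : ℕ, ENNReal.ofReal ((δ * 2 ^ (n : ℤ)) ^ β) *
        ∫⁻ z in ball x (δ * 2 ^ ((n : ℤ) + 1)), g z ∂μ ≤
      C * ENNReal.ofReal (2 ^ s / (1 - 2 ^ (β + s)) * δ ^ (β + s)) := by
  calc _ ≤ ∑' n : ℕ, C * ENNReal.ofReal (2 ^ s * δ ^ (β + s) * (2 ^ (β + s)) ^ n) :=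
        ENNReal.tsum_le_tsum fun n => by
          simpa using ofReal_rpow_mul_lintegral_ball_le (β := β) hδ hg n
    _ = C * ENNReal.ofReal (2 ^ s / (1 - 2 ^ (β + s)) * δ ^ (β + s)) := by
        rw [ENNReal.tsum_mul_left, tsum_ofReal_mul_pow (by positivity) (by positivity)
          (Real.rpow_lt_one_of_one_lt_of_neg one_lt_two hγ)]
        ring_nf

theorem tsum_annulus_neg_le {β s δ : ℝ} {C : ℝ≥0∞} {g : E → ℝ≥0∞} {x : E}
    (hδ : 0 < δ) (hγ : 0 < β + s)
    (hg : ∀ r > 0, ∫⁻ z in ball x r, g z ∂μ ≤ C * ENNReal.ofReal (r ^ s)) :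
    ∑' n : ℕ, ENNReal.ofReal ((δ * 2 ^ (-((n : ℤ) + 1))) ^ β) *
        ∫⁻ z in ball x (δ * 2 ^ (-((n : ℤ) + 1) + 1)), g z ∂μ ≤
      C * ENNReal.ofReal (2 ^ s / (2 ^ (β + s) - 1) * δ ^ (β + s)) := by
  have h2γ : 1 < (2 : ℝ) ^ (β + s) := Real.one_lt_rpow one_lt_two hγ
  set t : ℝ := ((2 : ℝ) ^ (β + s))⁻¹
  have ht : t < 1 := inv_lt_one_of_one_lt₀ h2γ
  calc _ ≤ ∑' n : ℕ, C * ENNReal.ofReal (2 ^ s * δ ^ (β + s) * t * t ^ n) :=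
        ENNReal.tsum_le_tsum fun n => by
          have hpow : ((2 : ℝ) ^ (β + s)) ^ (-((n : ℤ) + 1)) = t * t ^ n := by
            rw [zpow_neg, zpow_add_one₀ (by positivity), zpow_natCast, mul_inv, inv_pow,
              mul_comm]
          simpa only [hpow, mul_assoc] using
            ofReal_rpow_mul_lintegral_ball_le (β := β) hδ hg (-((n : ℤ) + 1))
    _ = C * ENNReal.ofReal (2 ^ s / (2 ^ (β + s) - 1) * δ ^ (β + s)) := by
        rw [ENNReal.tsum_mul_left, tsum_ofReal_mul_pow (by positivity) (by positivity) ht]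
        congr 2
        simp only [t]
        field_simp

theorem lintegral_mul_norm_rpow_le_of_growth [BorelSpace E] [μ.IsAddLeftInvariant]
    {β s₁ s₂ δ : ℝ} {C₁ C₂ : ℝ≥0∞} {g : E → ℝ≥0∞} {x : E} (hβ : β < 0) (hδ : 0 < δ)
    (hγ₁ : 0 < β + s₁) (hγ₂ : β + s₂ < 0)
    (hg₁ : ∀ r > 0, ∫⁻ z in ball x r, g z ∂μ ≤ C₁ * ENNReal.ofReal (r ^ s₁))
    (hg₂ : ∀ r > 0, ∫⁻ z in ball x r, g z ∂μ ≤ C₂ * ENNReal.ofReal (r ^ s₂)) :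
    ∫⁻ y, g (x + y) * ENNReal.ofReal (‖y‖ ^ β) ∂μ ≤
      C₁ * ENNReal.ofReal (2 ^ s₁ / (2 ^ (β + s₁) - 1) * δ ^ (β + s₁)) +
        C₂ * ENNReal.ofReal (2 ^ s₂ / (1 - 2 ^ (β + s₂)) * δ ^ (β + s₂)) := by
  refine (lintegral_le_tsum_annulus hβ hδ g x).trans ?_
  rw [tsum_of_nat_of_neg_add_one ENNReal.summable ENNReal.summable, add_comm]
  exact add_le_add (tsum_annulus_neg_le hδ hγ₁ hg₁) (tsum_annulus_nonneg_le hδ hγ₂ hg₂)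

end Annuli

open Filter Topology in
theorem le_mul_rpow_of_forall_le_add {R M C₁ C₂ : ℝ≥0∞} {A α q : ℝ} (hα : 0 < α) (hq : 1 < q)
    (hA : 0 ≤ A) (hC₁ : C₁ ≠ 0) (hC₂ : C₂ ≠ ∞) (hM : A = 0 → M = 0)
    (h : ∀ δ : ℝ, 0 < δ → R ≤ C₁ * M * ENNReal.ofReal (δ ^ α) +
      C₂ * ENNReal.ofReal (A ^ q * δ ^ (α * (1 - q)))) :
    R ≤ (C₁ + C₂) * ENNReal.ofReal A * M ^ (1 - 1 / q) := by
  have hq₀ : 0 < q := one_pos.trans hq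
  rcases eq_or_ne M 0 with rfl | hM₀
  · -- with `M = 0` only the large-scale term is left, and it vanishes as `δ → ∞`
    have hlim : Tendsto (fun δ : ℝ => C₂ * ENNReal.ofReal (A ^ q * δ ^ (α * (1 - q))))
        atTop (𝓝 0) := by
      have hexp : α * (1 - q) = -(α * (q - 1)) := by ring
      have := (tendsto_rpow_neg_atTop (by nlinarith : 0 < α * (q - 1))).const_mul (A ^ q)
      rw [hexp]
      simpa using ENNReal.Tendsto.const_mul (ENNReal.tendsto_ofReal this) (Or.inr hC₂)
    refine (ge_of_tendsto hlim ?_).trans zero_le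
    filter_upwards [eventually_gt_atTop 0] with δ hδ
    simpa using h δ hδ
  have hApos : 0 < A := hA.lt_of_ne fun h0 => hM₀ (hM h0.symm)
  rcases eq_or_ne M ∞ with rfl | hM_top
  · have hexp : 0 < 1 - 1 / q := by
      rw [sub_pos, div_lt_one hq₀]
      exact hq
    rw [top_rpow_of_pos hexp, mul_top (mul_ne_zero (by simp [hC₁]) (by simpa using hApos))]
    exact le_top
  set m := M.toReal
  have hm : 0 < m := toReal_pos hM₀ hM_top
  -- the scale `δ = t ^ α⁻¹` balances the two terms: `m δ^α = A^q δ^(α(1-q))`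
  set t := A * m ^ (-(1 / q))
  have ht : 0 < t := by positivity
  have hδα : (t ^ α⁻¹) ^ α = t := Real.rpow_inv_rpow ht.le hα.ne'
  have hnear : m * t = A * m ^ (1 - 1 / q) := by
    rw [sub_eq_add_neg, Real.rpow_add hm, Real.rpow_one]
    ring
  have hfar : A ^ q * t ^ (1 - q) = A * m ^ (1 - 1 / q) := by
    rw [Real.mul_rpow hApos.le (by positivity), ← Real.rpow_mul hm.le, ← mul_assoc,
      ← Real.rpow_add hApos, add_sub_cancel, Real.rpow_one]
    congr 2
    field_simp
    ring
  calc R ≤ C₁ * M * ENNReal.ofReal ((t ^ α⁻¹) ^ α) +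
        C₂ * ENNReal.ofReal (A ^ q * (t ^ α⁻¹) ^ (α * (1 - q))) := h _ (by positivity)
    _ = C₁ * ENNReal.ofReal (m * t) + C₂ * ENNReal.ofReal (A ^ q * t ^ (1 - q)) := by
        rw [Real.rpow_mul (by positivity), hδα, ← ofReal_toReal hM_top,
          ENNReal.ofReal_mul hm.le]
        ring
    _ = (C₁ + C₂) * ENNReal.ofReal A * M ^ (1 - 1 / q) := by
        rw [hnear, hfar, ← ofReal_toReal hM_top, ofReal_rpow_of_pos hm,
          ENNReal.ofReal_mul hApos.le]
        ring

theorem lintegral_rpow_le_rpow_mul_measure_univ {X : Type*} [MeasurableSpace X] {μ : Measure X}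
    {f : X → ℝ≥0∞} (hf : AEMeasurable f μ) {q p : ℝ} (hq : 0 < q) (hqp : q ≤ p) :
    ∫⁻ a, f a ^ q ∂μ ≤ (∫⁻ a, f a ^ p ∂μ) ^ (q / p) * μ Set.univ ^ (1 - q / p) := by
  have hp : 0 < p := hq.trans_le hqp
  have h := ENNReal.lintegral_mul_norm_pow_le (hf.pow_const p) aemeasurable_const
    (div_nonneg hq.le hp.le) (sub_nonneg.2 ((div_le_one hp).2 hqp)) (add_sub_cancel _ _)
    (g := fun _ => 1)
  simpa [← ENNReal.rpow_mul, mul_div_cancel₀ _ hp.ne'] using h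

theorem setLIntegral_ball_rpow_le_of_morrey {E : Type*} [NormedAddCommGroup E]
    [NormedSpace ℝ E] [MeasurableSpace E] [BorelSpace E] [FiniteDimensional ℝ E] {μ : Measure E}
    [μ.IsAddHaarMeasure] {f : E → ℝ≥0∞} (hf : Measurable f) {α q p A r : ℝ} (hq : 0 < q)
    (hqp : q ≤ p) (hA : 0 ≤ A) (hr : 0 < r) (z : E)
    (hmorrey : ∫⁻ y in ball z r, f y ^ p ∂μ ≤
      ENNReal.ofReal (A ^ p * r ^ ((Module.finrank ℝ E : ℝ) - p * α))) :
    ∫⁻ y in ball z r, f y ^ q ∂μ ≤ μ (ball 0 1) ^ (1 - q / p) * ENNReal.ofReal (A ^ q) *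
      ENNReal.ofReal (r ^ ((Module.finrank ℝ E : ℝ) - q * α)) := by
  set n : ℝ := (Module.finrank ℝ E : ℝ)
  have hp : 0 < p := hq.trans_le hqp
  have hs : 0 ≤ q / p := by positivity
  have ht : 0 ≤ 1 - q / p := sub_nonneg.2 ((div_le_one hp).2 hqp)
  have hexp : (A ^ p * r ^ (n - p * α)) ^ (q / p) * (r ^ n) ^ (1 - q / p) =
      A ^ q * r ^ (n - q * α) := by
    rw [Real.mul_rpow (by positivity) (by positivity), ← Real.rpow_mul hA,
      ← Real.rpow_mul hr.le, ← Real.rpow_mul hr.le, mul_assoc, ← Real.rpow_add hr,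
      mul_div_cancel₀ _ hp.ne']
    congr 2
    field_simp
    ring
  calc ∫⁻ y in ball z r, f y ^ q ∂μ
      ≤ (∫⁻ y in ball z r, f y ^ p ∂μ) ^ (q / p) *
          μ.restrict (ball z r) Set.univ ^ (1 - q / p) :=
        lintegral_rpow_le_rpow_mul_measure_univ hf.aemeasurable hq hqp
    _ ≤ ENNReal.ofReal (A ^ p * r ^ (n - p * α)) ^ (q / p) *
        (ENNReal.ofReal (r ^ n) * μ (ball 0 1)) ^ (1 - q / p) := by
        rw [Measure.restrict_apply_univ, Measure.addHaar_ball_of_pos μ z hr,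
          ← Real.rpow_natCast]
        gcongr
    _ = μ (ball 0 1) ^ (1 - q / p) * ENNReal.ofReal (A ^ q) *
          ENNReal.ofReal (r ^ (n - q * α)) := by
        rw [ENNReal.mul_rpow_of_nonneg _ _ ht, ofReal_rpow_of_nonneg (by positivity) hs,
          ofReal_rpow_of_nonneg (by positivity) ht, mul_assoc _ (ENNReal.ofReal _),
          ← ENNReal.ofReal_mul (by positivity), ← hexp, ENNReal.ofReal_mul (by positivity)]
        ring

theorem lintegral_ball_le_maxFun_mul {d : ℕ} (g : EuclideanSpace ℝ (Fin d) → ℝ≥0∞)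
    {x z : EuclideanSpace ℝ (Fin d)} {r : ℝ} (hx : x ∈ ball z r) :
    ∫⁻ y in ball z r, g y ≤ maxFun g x * volume (ball z r) := by
  have hr : 0 < r := pos_of_mem_ball hx
  rw [← ENNReal.div_le_iff (measure_ball_pos volume z hr).ne' measure_ball_lt_top.ne]
  exact le_iSup₂_of_le z r (le_iSup_of_le hx le_rfl)

theorem maxFun_eq_zero {d : ℕ} {g : EuclideanSpace ℝ (Fin d) → ℝ≥0∞}
    (h : ∀ z, ∀ r > 0, ∫⁻ y in ball z r, g y = 0) (x : EuclideanSpace ℝ (Fin d)) :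
    maxFun g x = 0 := by
  simp only [maxFun, ENNReal.iSup_eq_zero]
  intro z r hx
  rw [h z r (pos_of_mem_ball hx), ENNReal.zero_div]

theorem exists_riesz_rpow_le_mul_maxFun (d : ℕ) (α q p : ℝ) (hα0 : 0 < α) (hαd : α < d)
    (hq : 1 < q) (hqp : q ≤ p) :
    ∃ C : ℝ≥0∞, C ≠ 0 ∧ C ≠ ∞ ∧
      ∀ f : EuclideanSpace ℝ (Fin d) → ℝ≥0∞, Measurable f → ∀ A : ℝ, 0 ≤ A →
      (∀ z, ∀ r > 0, ∫⁻ y in ball z r, f y ^ p ≤ ENNReal.ofReal (A ^ p * r ^ ((d : ℝ) - p * α))) →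
      ∀ x, riesz α (fun y => f y ^ q) x ≤
        C * ENNReal.ofReal A * maxFun (fun y => f y ^ q) x ^ (1 - 1 / q) := by
  have hq₀ : 0 < q := one_pos.trans hq
  have hp₀ : 0 < p := hq₀.trans_le hqp
  set V := volume (ball (0 : EuclideanSpace ℝ (Fin d)) 1)
  have hV : V ≠ ∞ := measure_ball_lt_top.ne
  have hk₁ : 0 < (2 : ℝ) ^ (d : ℝ) / (2 ^ α - 1) :=
    div_pos (by positivity) (sub_pos.2 (Real.one_lt_rpow one_lt_two hα0))
  have hk₂ : 0 < (2 : ℝ) ^ ((d : ℝ) - q * α) / (1 - 2 ^ (α * (1 - q))) :=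
    div_pos (by positivity)
      (sub_pos.2 (Real.rpow_lt_one_of_one_lt_of_neg one_lt_two (by nlinarith)))
  set C₁ := V * ENNReal.ofReal ((2 : ℝ) ^ (d : ℝ) / (2 ^ α - 1))
  set C₂ := V ^ (1 - q / p) *
    ENNReal.ofReal ((2 : ℝ) ^ ((d : ℝ) - q * α) / (1 - 2 ^ (α * (1 - q))))
  have hC₁ : C₁ ≠ 0 := mul_ne_zero (measure_ball_pos volume _ one_pos).ne' (by simpa using hk₁)
  have hC₂ : C₂ ≠ ∞ :=
    mul_ne_top (rpow_ne_top_of_nonneg (sub_nonneg.2 ((div_le_one hp₀).2 hqp)) hV) ofReal_ne_top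
  refine ⟨C₁ + C₂, by simp [hC₁], add_ne_top.2 ⟨mul_ne_top hV ofReal_ne_top, hC₂⟩,
    fun f hf A hA hmorrey x => ?_⟩
  set M := maxFun (fun y => f y ^ q) x
  have hfar : ∀ z, ∀ r > 0, ∫⁻ y in ball z r, f y ^ q ≤
      V ^ (1 - q / p) * ENNReal.ofReal (A ^ q) * ENNReal.ofReal (r ^ ((d : ℝ) - q * α)) := by
    intro z r hr
    have h := setLIntegral_ball_rpow_le_of_morrey hf hq₀ hqp hA hr z
      (by rw [finrank_euclideanSpace_fin]; exact hmorrey z r hr)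
    rwa [finrank_euclideanSpace_fin] at h
  have hnear : ∀ r > 0, ∫⁻ y in ball x r, f y ^ q ≤ M * V * ENNReal.ofReal (r ^ (d : ℝ)) := by
    intro r hr
    refine (lintegral_ball_le_maxFun_mul _ (mem_ball_self hr)).trans_eq ?_
    rw [Measure.addHaar_ball_of_pos _ _ hr, finrank_euclideanSpace_fin, ← Real.rpow_natCast]
    ring
  have hM : A = 0 → M = 0 := fun hA0 => maxFun_eq_zero (fun z r hr =>
    le_zero_iff.1 ((hfar z r hr).trans_eq (by simp [hA0, Real.zero_rpow hq₀.ne']))) x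
  refine le_mul_rpow_of_forall_le_add hα0 hq hA hC₁ hC₂ hM fun δ hδ => ?_
  have h := lintegral_mul_norm_rpow_le_of_growth (β := α - d) (by linarith) hδ
    (by linarith : 0 < α - d + d) (by nlinarith : α - d + (d - q * α) < 0) hnear (hfar x)
  rw [show α - d + d = α by ring, show α - d + (d - q * α) = α * (1 - q) by ring] at h
  refine h.trans_eq ?_
  rw [ENNReal.ofReal_mul hk₁.le, ENNReal.ofReal_mul hk₂.le, ENNReal.ofReal_mul (by positivity)]
  ring

theorem riesz_le_maxFun_pow_general
    (d : ℕ) (α q p : ℝ) (hα0 : 0 < α) (hαd : α < d)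
    (hq : 1 < q) (hqp : q ≤ p) :
    ∃ N : ℝ, 0 < N ∧
      ∀ b : EuclideanSpace ℝ (Fin d) → ℝ, Measurable b → (∀ x, 0 ≤ b x) →
      ∀ A : ℝ, 0 ≤ A →
      (∀ (x : EuclideanSpace ℝ (Fin d)) (ρ : ℝ), 0 < ρ →
        ∫⁻ y in ball x ρ, ENNReal.ofReal (b y ^ p) ≤
          ENNReal.ofReal (A ^ p * ρ ^ ((d : ℝ) - p * α))) →
      ∀ x : EuclideanSpace ℝ (Fin d),
        riesz α (fun y => ENNReal.ofReal (b y ^ q)) x ≤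
          ENNReal.ofReal (N * A) *
            (maxFun (fun y => ENNReal.ofReal (b y ^ q)) x) ^ (1 - 1 / q) := by
  obtain ⟨C, hC₀, hC, hle⟩ := exists_riesz_rpow_le_mul_maxFun d α q p hα0 hαd hq hqp
  refine ⟨C.toReal, toReal_pos hC₀ hC, fun b hb hb0 A hA hMor x => ?_⟩
  have hpow : ∀ r : ℝ, 0 ≤ r →
      (fun y => ENNReal.ofReal (b y ^ r)) = fun y => ENNReal.ofReal (b y) ^ r :=
    fun r hr => funext fun y => (ofReal_rpow_of_nonneg (hb0 y) hr).symm
  rw [hpow q (by linarith), ENNReal.ofReal_mul toReal_nonneg, ofReal_toReal hC]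
  exact hle _ hb.ennreal_ofReal A hA
    (fun z r hr => hpow p (by linarith) ▸ hMor z r hr) x

/-- **Lemma 4.** If `1 < q ≤ p ≤ d` and `b ≥ 0` satisfies the Morrey condition with
exponent `p`, then pointwise `R_α(b^q) ≤ N A (𝕄(b^q))^(1 - 1/q)` with `N = N(α,d,q,p)`. -/
theorem riesz_le_maxFun_pow
    (d : ℕ) (hd : 1 ≤ d) (α q p : ℝ) (hα0 : 0 < α) (hαd : α < d)
    (hq : 1 < q) (hqp : q ≤ p) (hpd : p ≤ d) :
    ∃ N : ℝ, 0 < N ∧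
      ∀ b : EuclideanSpace ℝ (Fin d) → ℝ, Measurable b → (∀ x, 0 ≤ b x) →
      ∀ A : ℝ, 0 ≤ A →
      (∀ (x : EuclideanSpace ℝ (Fin d)) (ρ : ℝ), 0 < ρ →
        ∫⁻ y in ball x ρ, ENNReal.ofReal (b y ^ p) ≤
          ENNReal.ofReal (A ^ p * ρ ^ ((d : ℝ) - p * α))) →
      ∀ x : EuclideanSpace ℝ (Fin d),
        riesz α (fun y => ENNReal.ofReal (b y ^ q)) x ≤
          ENNReal.ofReal (N * A) *
            (maxFun (fun y => ENNReal.ofReal (b y ^ q)) x) ^ (1 - 1 / q) :=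
  riesz_le_maxFun_pow_general d α q p hα0 hαd hq hqp
end

section
/- Let d ≥ 1 be an integer, α ∈ (0, d), and let p satisfy 1 < p ≤ d. Let b : ℝ^d → [0,∞) be measurable and A ≥ 0 satisfy ∫_B b^p dx ≤ A^p ρ^{d - pα} for every ρ > 0 and every ball B of radius ρ. Then for every ρ > 0, ∫_{ℝ^d} b^p (𝕄 𝟙_{B_ρ}) dx ≤ N A^p ρ^{d - pα}, where 𝟙_{B_ρ} is the indicator of the ball of radius ρ centered at the origin and N depends only on α, d, p. -/
open MeasureTheory Metric ENNReal
open scoped FourierTransform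

lemma maxFun_le_one {d : ℕ} (ρ : ℝ) (x : EuclideanSpace ℝ (Fin d)) :
    maxFun ((ball (0 : EuclideanSpace ℝ (Fin d)) ρ).indicator fun _ => (1 : ℝ≥0∞)) x ≤ 1 := by
  refine iSup_le fun z => iSup_le fun r => iSup_le fun hxz => ?_
  refine ENNReal.div_le_of_le_mul ?_
  rw [one_mul]
  calc ∫⁻ y in ball z r, (ball (0 : EuclideanSpace ℝ (Fin d)) ρ).indicator (fun _ => (1:ℝ≥0∞)) y
      ≤ ∫⁻ _ in ball z r, 1 := lintegral_mono fun y => by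
        by_cases h : y ∈ ball (0 : EuclideanSpace ℝ (Fin d)) ρ <;> simp [Set.indicator, h]
    _ = volume (ball z r) := by simp

lemma lint_indicator_ball {d : ℕ} (ρ : ℝ) (z : EuclideanSpace ℝ (Fin d)) (r : ℝ) :
    (∫⁻ y in ball z r, (ball (0 : EuclideanSpace ℝ (Fin d)) ρ).indicator (fun _ => (1:ℝ≥0∞)) y)
      = volume (ball (0 : EuclideanSpace ℝ (Fin d)) ρ ∩ ball z r) := by
  have : ((fun _ => (1:ℝ≥0∞)) : EuclideanSpace ℝ (Fin d) → ℝ≥0∞) = 1 := rfl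
  rw [this, lintegral_indicator_one measurableSet_ball,
    Measure.restrict_apply measurableSet_ball]

lemma maxFun_indicator_decay {d : ℕ} (hd : 1 ≤ d) {ρ R : ℝ} (hρ : 0 < ρ) (hR : 2 * ρ ≤ R)
    {x : EuclideanSpace ℝ (Fin d)} (hx : R ≤ ‖x‖) :
    maxFun ((ball (0 : EuclideanSpace ℝ (Fin d)) ρ).indicator fun _ => (1 : ℝ≥0∞)) x ≤
      ENNReal.ofReal ((4 * ρ / R) ^ d) := by
  haveI : Nonempty (Fin d) := ⟨⟨0, hd⟩⟩
  haveI : Nontrivial (EuclideanSpace ℝ (Fin d)) := inferInstance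
  have hR0 : 0 < R := lt_of_lt_of_le (by linarith) hR
  refine iSup_le fun z => iSup_le fun r => iSup_le fun hxz => ?_
  have hr0 : 0 < r := pos_of_mem_ball hxz
  rw [lint_indicator_ball]
  rcases Set.eq_empty_or_nonempty
      (ball (0 : EuclideanSpace ℝ (Fin d)) ρ ∩ ball z r) with h | ⟨w, hw1, hw2⟩
  · rw [h]; simp
  · have hw1' : ‖w‖ < ρ := mem_ball_zero_iff.mp hw1
    have hxw : dist x w < 2 * r := by
      have h1 : dist x z < r := mem_ball.mp hxz
      have h2 : dist w z < r := mem_ball.mp hw2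
      calc dist x w ≤ dist x z + dist z w := dist_triangle ..
        _ = dist x z + dist w z := by rw [dist_comm z w]
        _ < 2 * r := by linarith
    have hr4 : R / 4 < r := by
      have hxn : ‖x‖ ≤ dist x w + ‖w‖ := by
        calc ‖x‖ = dist x 0 := (dist_zero_right x).symm
          _ ≤ dist x w + dist w 0 := dist_triangle ..
          _ = dist x w + ‖w‖ := by rw [dist_zero_right]
      nlinarith
    calc volume (ball (0 : EuclideanSpace ℝ (Fin d)) ρ ∩ ball z r) / volume (ball z r)
        ≤ volume (ball (0 : EuclideanSpace ℝ (Fin d)) ρ) / volume (ball z r) :=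
          ENNReal.div_le_div_right (measure_mono Set.inter_subset_left) _
      _ = (ENNReal.ofReal (ρ^d) * volume (ball (0 : EuclideanSpace ℝ (Fin d)) 1)) /
            (ENNReal.ofReal (r^d) * volume (ball (0 : EuclideanSpace ℝ (Fin d)) 1)) := by
          rw [Measure.addHaar_ball volume _ hρ.le, Measure.addHaar_ball volume _ hr0.le,
            finrank_euclideanSpace_fin]
      _ = ENNReal.ofReal (ρ^d) / ENNReal.ofReal (r^d) :=
          ENNReal.mul_div_mul_right _ _ (measure_ball_pos _ _ one_pos).ne' measure_ball_lt_top.ne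
      _ = ENNReal.ofReal (ρ^d / r^d) := (ENNReal.ofReal_div_of_pos (by positivity)).symm
      _ ≤ ENNReal.ofReal ((4 * ρ / R) ^ d) := by
          apply ENNReal.ofReal_le_ofReal
          rw [← div_pow]
          apply pow_le_pow_left₀ (by positivity)
          rw [div_le_div_iff₀ hr0 hR0]
          nlinarith

/-- Dyadic annuli around the origin. -/
def dyadicAnn (d : ℕ) (ρ : ℝ) : ℕ → Set (EuclideanSpace ℝ (Fin d))
  | 0 => ball 0 ρ
  | (m+1) => ball 0 (2 ^ (m+1) * ρ) \ ball 0 (2 ^ m * ρ)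

/-- Constants bounding the maximal function on each annulus. -/
noncomputable def dyadicC (d : ℕ) : ℕ → ℝ
  | 0 => 1
  | 1 => 1
  | (m+2) => (4 / 2 ^ (m+1) : ℝ) ^ d

/-- **Lemma 5.** If `1 < p ≤ d` and `b ≥ 0` satisfies the Morrey condition with
exponent `p`, then `∫ b^p 𝕄(𝟙_{B_ρ}) ≤ N A^p ρ^(d - pα)` with `N = N(α,d,p)`. -/
theorem weighted_maximal_indicator_bound
    (d : ℕ) (hd : 1 ≤ d) (α p : ℝ) (hα0 : 0 < α) (hαd : α < d)
    (hp : 1 < p) (hpd : p ≤ d) :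
    ∃ N : ℝ, 0 < N ∧
      ∀ b : EuclideanSpace ℝ (Fin d) → ℝ, Measurable b → (∀ x, 0 ≤ b x) →
      ∀ A : ℝ, 0 ≤ A →
      (∀ (x : EuclideanSpace ℝ (Fin d)) (ρ : ℝ), 0 < ρ →
        ∫⁻ y in ball x ρ, ENNReal.ofReal (b y ^ p) ≤
          ENNReal.ofReal (A ^ p * ρ ^ ((d : ℝ) - p * α))) →
      ∀ ρ : ℝ, 0 < ρ →
        ∫⁻ x, ENNReal.ofReal (b x ^ p) *
            maxFun ((ball (0 : EuclideanSpace ℝ (Fin d)) ρ).indicator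
              fun _ => (1 : ℝ≥0∞)) x ≤
          ENNReal.ofReal (N * A ^ p * ρ ^ ((d : ℝ) - p * α)) := by
  have hpα : 0 < p * α := mul_pos (by linarith) hα0
  set q : ℝ := (2 : ℝ) ^ (-(p * α)) with hqdef
  have hq0 : 0 < q := Real.rpow_pos_of_pos two_pos _
  have hq1 : q < 1 := Real.rpow_lt_one_of_one_lt_of_neg one_lt_two (by linarith)
  refine ⟨(8 : ℝ) ^ d * (1 - q)⁻¹, mul_pos (pow_pos (by norm_num) d) (inv_pos.mpr (by linarith)), ?_⟩
  intro b hb hb0 A hA hmor ρ hρ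
  set e : ℝ := (d : ℝ) - p * α with hedef
  set f : EuclideanSpace ℝ (Fin d) → ℝ≥0∞ := fun x => ENNReal.ofReal (b x ^ p) with hfdef
  have hfm : Measurable f := (hb.pow_const p).ennreal_ofReal
  set M : EuclideanSpace ℝ (Fin d) → ℝ≥0∞ :=
    maxFun ((ball (0 : EuclideanSpace ℝ (Fin d)) ρ).indicator fun _ => (1 : ℝ≥0∞)) with hMdef
  set T : ℕ → Set (EuclideanSpace ℝ (Fin d)) := dyadicAnn d ρ with hTdef
  set c : ℕ → ℝ := dyadicC d with hcdef
  have hc0 : ∀ k, 0 ≤ c k := by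
    intro k
    rcases k with _ | _ | m <;> simp [hcdef, dyadicC] <;> positivity
  -- covering
  have hcover : (⋃ k, T k) = Set.univ := by
    ext x
    simp only [Set.mem_univ, iff_true, Set.mem_iUnion]
    have hex : ∃ n : ℕ, ‖x‖ < 2 ^ n * ρ := by
      obtain ⟨n, hn⟩ := pow_unbounded_of_one_lt (‖x‖ / ρ) (one_lt_two (α := ℝ))
      exact ⟨n, by rw [div_lt_iff₀ hρ] at hn; linarith⟩
    rcases hn : Nat.find hex with _ | m
    · refine ⟨0, ?_⟩
      have hs := Nat.find_spec hex; rw [hn, pow_zero, one_mul] at hs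
      exact mem_ball_zero_iff.mpr hs
    · refine ⟨m + 1, ?_⟩
      have h1 := Nat.find_spec hex; rw [hn] at h1
      have h2 : ¬ ‖x‖ < 2 ^ m * ρ := Nat.find_min hex (hn ▸ Nat.lt_succ_self m)
      exact ⟨mem_ball_zero_iff.mpr h1, fun h => h2 (mem_ball_zero_iff.mp h)⟩
  -- pointwise bound on annuli
  have hMle : ∀ k, ∀ x ∈ T k, M x ≤ ENNReal.ofReal (c k) := by
    intro k x hx
    rcases k with _ | m
    · rw [show c 0 = 1 from rfl, ENNReal.ofReal_one]; exact maxFun_le_one ρ x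
    · rcases m with _ | m'
      · rw [show c 1 = 1 from rfl, ENNReal.ofReal_one]; exact maxFun_le_one ρ x
      · have hx2 : (2 : ℝ) ^ (m' + 1) * ρ ≤ ‖x‖ := by
          have h := hx.2
          rw [mem_ball_zero_iff] at h
          exact not_lt.mp h
        have hRge : 2 * ρ ≤ 2 ^ (m' + 1) * ρ := by
          have h2 : (2:ℝ) ≤ 2 ^ (m' + 1) := by
            calc (2:ℝ) = 2 ^ 1 := (pow_one 2).symm
              _ ≤ 2 ^ (m' + 1) := pow_le_pow_right₀ one_le_two (by omega)
          nlinarith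
        have hdec := maxFun_indicator_decay hd hρ hRge hx2
        rw [show c (m' + 2) = (4 / 2 ^ (m'+1) : ℝ) ^ d from rfl,
          show (4 / 2 ^ (m'+1) : ℝ) = 4 * ρ / (2 ^ (m'+1) * ρ) from
            (mul_div_mul_right _ _ hρ.ne').symm]
        exact hdec
  -- containment in balls
  have hsub : ∀ k, T k ⊆ ball (0 : EuclideanSpace ℝ (Fin d)) (2 ^ k * ρ) := by
    intro k
    rcases k with _ | m
    · rw [pow_zero, one_mul]; exact subset_rfl
    · exact Set.diff_subset
  -- the core real inequality
  have keyreal : ∀ k : ℕ, c k * ((2:ℝ) ^ k) ^ e ≤ 8 ^ d * q ^ k := by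
    have h8 : ((8:ℝ)) ^ d = (2:ℝ) ^ ((3 * d : ℕ) : ℝ) := by
      rw [Real.rpow_natCast, pow_mul]; norm_num
    have hqk : ∀ k : ℕ, q ^ k = (2:ℝ) ^ (-(p * α) * (k : ℝ)) := by
      intro k
      rw [← Real.rpow_natCast q k, hqdef, ← Real.rpow_mul (by norm_num)]
    have hbase : ∀ k : ℕ, ((2:ℝ) ^ k) ^ e = (2:ℝ) ^ ((k : ℝ) * e) := by
      intro k
      rw [← Real.rpow_natCast 2 k, ← Real.rpow_mul (by norm_num)]
    intro k
    rcases k with _ | _ | m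
    · rw [show c 0 = 1 from rfl]
      rw [pow_zero, Real.one_rpow, pow_zero, mul_one, mul_one]
      exact one_le_pow₀ (by norm_num)
    · rw [show c 1 = 1 from rfl, one_mul, hbase 1, hqk 1]
      have : ((1:ℕ) : ℝ) * e = (d : ℝ) + (-(p * α) * ((1:ℕ) : ℝ)) := by push_cast; ring
      rw [this, Real.rpow_add two_pos, Real.rpow_natCast]
      have h2d : (2:ℝ) ^ d ≤ 8 ^ d := pow_le_pow_left₀ (by norm_num) (by norm_num) d
      have hpos : (0:ℝ) < 2 ^ (-(p * α) * ((1:ℕ):ℝ)) := Real.rpow_pos_of_pos two_pos _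
      nlinarith
    · rw [show c (m + 2) = (4 / 2 ^ (m+1) : ℝ) ^ d from rfl]
      have hc' : ((4 / 2 ^ (m+1) : ℝ)) ^ d = (2:ℝ) ^ ((((2 * d : ℕ)) : ℝ) - (((m+1) * d : ℕ) : ℝ)) := by
        rw [div_pow, show (4:ℝ) ^ d = 2 ^ (2 * d) by rw [pow_mul]; norm_num,
          ← pow_mul, ← Real.rpow_natCast 2 (2 * d), ← Real.rpow_natCast 2 ((m+1) * d),
          ← Real.rpow_sub two_pos]
      rw [hc', hbase (m+2), hqk (m+2), h8, ← Real.rpow_add two_pos, ← Real.rpow_add two_pos]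
      apply le_of_eq
      congr 1
      rw [hedef]
      push_cast
      ring
  -- per-annulus integral bound
  have hTm : ∀ k, MeasurableSet (T k) := by
    intro k
    rcases k with _ | m
    · exact measurableSet_ball
    · exact measurableSet_ball.diff measurableSet_ball
  have key : ∀ k : ℕ, (∫⁻ x in T k, f x * M x) ≤
      ENNReal.ofReal ((8 ^ d * A ^ p * ρ ^ e) * q ^ k) := by
    intro k
    have h1 : (∫⁻ x in T k, f x * M x) ≤ ∫⁻ x in T k, f x * ENNReal.ofReal (c k) :=
      setLIntegral_mono (hfm.mul_const _) (fun x hx => mul_le_mul_right (hMle k x hx) _)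
    have h2 : (∫⁻ x in T k, f x * ENNReal.ofReal (c k)) =
        ENNReal.ofReal (c k) * ∫⁻ x in T k, f x := by
      rw [lintegral_mul_const _ hfm, mul_comm]
    have h3 : (∫⁻ x in T k, f x) ≤ ENNReal.ofReal (A ^ p * ((2:ℝ) ^ k * ρ) ^ e) :=
      le_trans (lintegral_mono_set (hsub k)) (hmor 0 _ (by positivity))
    have h4 : c k * (A ^ p * ((2:ℝ) ^ k * ρ) ^ e) ≤ (8 ^ d * A ^ p * ρ ^ e) * q ^ k := by
      rw [Real.mul_rpow (by positivity) hρ.le]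
      have hs : 0 ≤ A ^ p * ρ ^ e := by positivity
      calc c k * (A ^ p * (((2:ℝ) ^ k) ^ e * ρ ^ e))
          = (c k * ((2:ℝ) ^ k) ^ e) * (A ^ p * ρ ^ e) := by ring
        _ ≤ (8 ^ d * q ^ k) * (A ^ p * ρ ^ e) :=
            mul_le_mul_of_nonneg_right (keyreal k) hs
        _ = (8 ^ d * A ^ p * ρ ^ e) * q ^ k := by ring
    calc (∫⁻ x in T k, f x * M x)
        ≤ ENNReal.ofReal (c k) * ∫⁻ x in T k, f x := h1.trans (le_of_eq h2)
      _ ≤ ENNReal.ofReal (c k) * ENNReal.ofReal (A ^ p * ((2:ℝ) ^ k * ρ) ^ e) :=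
          mul_le_mul_right h3 _
      _ = ENNReal.ofReal (c k * (A ^ p * ((2:ℝ) ^ k * ρ) ^ e)) :=
          (ENNReal.ofReal_mul (hc0 k)).symm
      _ ≤ ENNReal.ofReal ((8 ^ d * A ^ p * ρ ^ e) * q ^ k) := ENNReal.ofReal_le_ofReal h4
  -- summing up
  have hC0 : 0 ≤ 8 ^ d * A ^ p * ρ ^ e := by positivity
  calc (∫⁻ x, f x * M x)
      = ∫⁻ x in ⋃ k, T k, f x * M x := by rw [hcover, Measure.restrict_univ]
    _ ≤ ∑' k, ∫⁻ x in T k, f x * M x := lintegral_iUnion_le T _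
    _ ≤ ∑' k : ℕ, ENNReal.ofReal ((8 ^ d * A ^ p * ρ ^ e) * q ^ k) := ENNReal.tsum_le_tsum key
    _ = ∑' k : ℕ, ENNReal.ofReal (8 ^ d * A ^ p * ρ ^ e) * (ENNReal.ofReal q) ^ k := by
        congr 1
        funext k
        rw [ENNReal.ofReal_mul hC0, ENNReal.ofReal_pow hq0.le]
    _ = ENNReal.ofReal (8 ^ d * A ^ p * ρ ^ e) * (1 - ENNReal.ofReal q)⁻¹ := by
        rw [ENNReal.tsum_mul_left, ENNReal.tsum_geometric]
    _ = ENNReal.ofReal ((8 ^ d * A ^ p * ρ ^ e) * (1 - q)⁻¹) := by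
        rw [ENNReal.ofReal_mul hC0, ← ENNReal.ofReal_one, ← ENNReal.ofReal_sub 1 hq0.le,
          ENNReal.ofReal_inv_of_pos (by linarith)]
    _ = ENNReal.ofReal (8 ^ d * (1 - q)⁻¹ * A ^ p * ρ ^ e) := by ring_nf
end

section
/- Let d ≥ 1 be an integer, α ∈ (0, d), and let r, p satisfy α ≤ r, 1 < r < p ≤ d. Let γ > 0 satisfy (1+γ)r ≤ p, 1 + γr' ≤ p, and r ≥ 1 + γ, where r' = r/(r-1). Let b : ℝ^d → [0,∞) be measurable, A ≥ 0, assume ∫_B b^p dx ≤ A^p ρ^{d - pα} for every ρ > 0 and every ball B of radius ρ, and assume additionally that b^p is an A_1-weight in the sense that 𝕄(b^p) ≤ C b^p almost everywhere for some constant C. Then almost everywhere on ℝ^d, R_α[(R_α(b^{(1+γ)r}))^{1/(r-1)}] ≤ N b^{γ r'} A^{r'}, where N depends only on α, d, r, p, γ, C. -/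
open MeasureTheory Metric ENNReal
open scoped FourierTransform

/-!
Hedberg's argument. For `1 < s ≤ p`, split `R_α(b^s)(x)` at radius `δ` and sum over dyadic
annuli: the part near `x` is at most a multiple of `δ^α 𝕄(b^s)(x) ≤ δ^α C^(s/p) b(x)^s` (Hölder
and the `A_1` condition), the far part at most a multiple of `A^s δ^(α - sα)` (Hölder and the
Morrey condition). Optimising in `δ` gives `R_α(b^s) ≤ N A b^(s-1)` a.e. Applied with
`s = (1+γ)r` and raised to the power `1/(r-1)`, this bounds the inner potential by
`(N A)^(1/(r-1)) b^(1+γr')`; applied again with `s = 1 + γr'`, it gives the theorem.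
-/

theorem setLIntegral_rpow_le_rpow_mul_measure_rpow {X : Type*} [MeasurableSpace X] {μ : Measure X}
    {f : X → ℝ≥0∞} (hf : AEMeasurable f μ) {s p : ℝ} (hs : 0 < s) (hsp : s ≤ p) (S : Set X) :
    ∫⁻ x in S, f x ^ s ∂μ ≤ (∫⁻ x in S, f x ^ p ∂μ) ^ (s / p) * μ S ^ (1 - s / p) := by
  have h := eLpNorm'_le_eLpNorm'_mul_rpow_measure_univ hs hsp hf.restrict.aestronglyMeasurable
    (μ := μ.restrict S)
  simp only [eLpNorm'_eq_lintegral_enorm, enorm_eq_self, Measure.restrict_apply_univ] at h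
  calc ∫⁻ x in S, f x ^ s ∂μ = ((∫⁻ x in S, f x ^ s ∂μ) ^ (1 / s)) ^ s := by
        rw [← ENNReal.rpow_mul, one_div_mul_cancel hs.ne', ENNReal.rpow_one]
    _ ≤ ((∫⁻ x in S, f x ^ p ∂μ) ^ (1 / p) * μ S ^ (1 / s - 1 / p)) ^ s :=
        ENNReal.rpow_le_rpow h hs.le
    _ = (∫⁻ x in S, f x ^ p ∂μ) ^ (s / p) * μ S ^ (1 - s / p) := by
        rw [ENNReal.mul_rpow_of_nonneg _ _ hs.le, ← ENNReal.rpow_mul, ← ENNReal.rpow_mul]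
        congr 2 <;> field_simp

theorem tsum_ofReal_mul_pow_s9 {U q : ℝ} (hU : 0 ≤ U) (hq0 : 0 ≤ q) (hq1 : q < 1) :
    ∑' k : ℕ, ENNReal.ofReal (U * q ^ k) = ENNReal.ofReal (U / (1 - q)) := by
  rw [← ENNReal.ofReal_tsum_of_nonneg (fun k => by positivity)
    ((summable_geometric_of_lt_one hq0 hq1).mul_left U), tsum_mul_left,
    tsum_geometric_of_lt_one hq0 hq1, div_eq_mul_inv]

theorem exists_nat_two_pow_le_lt {t δ : ℝ} (hδ : 0 < δ) (hδt : δ ≤ t) :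
    ∃ k : ℕ, δ * 2 ^ k ≤ t ∧ t < 2 * (δ * 2 ^ k) := by
  obtain ⟨k, h₁, h₂⟩ := exists_nat_pow_near ((one_le_div hδ).2 hδt) one_lt_two
  refine ⟨k, by rwa [le_div_iff₀' hδ] at h₁, ?_⟩
  rw [div_lt_iff₀ hδ, pow_succ] at h₂
  linarith

theorem exists_nat_half_pow_le_lt {t δ : ℝ} (ht : 0 < t) (htδ : t < δ) :
    ∃ k : ℕ, δ / 2 * (1 / 2) ^ k ≤ t ∧ t < 2 * (δ / 2 * (1 / 2) ^ k) := by
  have hδ : 0 < δ := ht.trans htδ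
  obtain ⟨n, h₁, h₂⟩ := exists_mem_Ico_zpow (div_pos ht hδ) one_lt_two
  have hn : n < 0 := by
    by_contra! hn
    exact (one_le_zpow₀ one_le_two hn).not_gt (h₁.trans_lt ((div_lt_one hδ).2 htδ))
  obtain ⟨k, rfl⟩ : ∃ k : ℕ, n = -(k + 1) := ⟨(-n - 1).toNat, by omega⟩
  rw [le_div_iff₀' hδ] at h₁
  rw [div_lt_iff₀ hδ] at h₂
  have e₁ : (2 : ℝ) ^ (-((k : ℤ) + 1)) = 1 / 2 * (1 / 2) ^ k := by
    rw [zpow_neg, ← Nat.cast_succ, zpow_natCast, pow_succ, one_div_pow]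
    field_simp
  have e₂ : (2 : ℝ) ^ (-((k : ℤ) + 1) + 1) = (1 / 2) ^ k := by
    rw [show -((k : ℤ) + 1) + 1 = -k by ring, zpow_neg, zpow_natCast, one_div_pow, one_div]
  rw [e₁] at h₁
  rw [e₂] at h₂
  exact ⟨k, by linarith, by linarith⟩

theorem rpow_le_of_le_ofReal_mul_rpow {X : ℝ≥0∞} {c t u e : ℝ} (hc : 0 ≤ c) (ht : 0 ≤ t)
    (he : 0 ≤ e) (h : X ≤ ENNReal.ofReal (c * t ^ u)) :
    X ^ e ≤ ENNReal.ofReal (c ^ e) * ENNReal.ofReal (t ^ (u * e)) := by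
  refine (ENNReal.rpow_le_rpow h he).trans_eq ?_
  rw [ENNReal.ofReal_rpow_of_nonneg (by positivity) he, Real.mul_rpow hc (by positivity),
    ← Real.rpow_mul ht, ENNReal.ofReal_mul (by positivity)]

theorem mul_div_rpow_eq {a b : ℝ} (ha : 0 < a) (hb : 0 ≤ b) (θ : ℝ) :
    a * (b / a) ^ θ = a ^ (1 - θ) * b ^ θ := by
  rw [Real.div_rpow hb ha.le, Real.rpow_sub ha, Real.rpow_one]
  field_simp

theorem le_ofReal_of_forall_le_add_rpow {X : ℝ≥0∞} {a b α β : ℝ} (ha : 0 ≤ a) (hb : 0 ≤ b)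
    (hα : 0 < α) (hαβ : α < β)
    (h : ∀ δ, 0 < δ → X ≤ ENNReal.ofReal (a * δ ^ α + b * δ ^ (α - β))) :
    X ≤ ENNReal.ofReal (2 * a ^ (1 - α / β) * b ^ (α / β)) := by
  set θ := α / β
  have hβ : 0 < β := hα.trans hαβ
  have hθ : 0 < θ := div_pos hα hβ
  have hθ' : 0 < 1 - θ := sub_pos.2 ((div_lt_one hβ).2 hαβ)
  -- `δ ^ β = (b + ε) / (a + ε)` balances the two terms; `ε > 0` avoids the cases `a = 0`, `b = 0`
  have hε : ∀ ε, 0 < ε → X ≤ ENNReal.ofReal (2 * (a + ε) ^ (1 - θ) * (b + ε) ^ θ) := by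
    intro ε hε
    have ha' : 0 < a + ε := by linarith
    have hb' : 0 < b + ε := by linarith
    set δ := ((b + ε) / (a + ε)) ^ β⁻¹
    have hδ : 0 < δ := by positivity
    have hδα : δ ^ α = ((b + ε) / (a + ε)) ^ θ := by
      rw [← Real.rpow_mul (by positivity), inv_mul_eq_div]
    have hδαβ : δ ^ (α - β) = ((a + ε) / (b + ε)) ^ (1 - θ) := by
      rw [← Real.rpow_mul (by positivity), ← inv_div, Real.inv_rpow (by positivity),
        ← Real.rpow_neg (by positivity)]
      congr 1
      simp only [θ]
      field_simp
      ring
    calc X ≤ ENNReal.ofReal (a * δ ^ α + b * δ ^ (α - β)) := h δ hδ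
      _ ≤ ENNReal.ofReal ((a + ε) * δ ^ α + (b + ε) * δ ^ (α - β)) := by
          gcongr <;> linarith
      _ = ENNReal.ofReal (2 * (a + ε) ^ (1 - θ) * (b + ε) ^ θ) := by
          rw [hδα, hδαβ, mul_div_rpow_eq ha' hb'.le, mul_div_rpow_eq hb' ha'.le,
            _root_.sub_sub_cancel]
          ring_nf
  have hcont : ContinuousAt
      (fun ε : ℝ => ENNReal.ofReal (2 * (a + ε) ^ (1 - θ) * (b + ε) ^ θ)) 0 :=
    ENNReal.continuous_ofReal.continuousAt.comp <|
      (continuousAt_const.mul ((continuousAt_const.add continuousAt_id).rpow_const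
        (Or.inr hθ'.le))).mul
      ((continuousAt_const.add continuousAt_id).rpow_const (Or.inr hθ.le))
  have hlim := hcont.tendsto.mono_left (nhdsWithin_le_nhds (s := Set.Ioi 0))
  simp only [add_zero] at hlim
  exact ge_of_tendsto hlim (eventually_nhdsWithin_of_forall hε)

section Euclidean

variable {d : ℕ}

local notation "𝔼" => EuclideanSpace ℝ (Fin d)

noncomputable def unitBallVolume (d : ℕ) : ℝ :=
  (volume (ball (0 : EuclideanSpace ℝ (Fin d)) 1)).toReal

theorem unitBallVolume_pos : 0 < unitBallVolume d :=
  ENNReal.toReal_pos (measure_ball_pos _ _ one_pos).ne' measure_ball_lt_top.ne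

theorem volume_ball_eq (x : 𝔼) {ρ : ℝ} (hρ : 0 < ρ) :
    volume (ball x ρ) = ENNReal.ofReal (unitBallVolume d * ρ ^ (d : ℝ)) := by
  rw [Measure.addHaar_ball_of_pos _ _ hρ, finrank_euclideanSpace_fin, mul_comm,
    ENNReal.ofReal_mul unitBallVolume_pos.le, Real.rpow_natCast, unitBallVolume,
    ENNReal.ofReal_toReal measure_ball_lt_top.ne]

theorem setLIntegral_ball_le_maxFun {g : 𝔼 → ℝ≥0∞} {x z : 𝔼} {ρ : ℝ} (hx : x ∈ ball z ρ) :
    ∫⁻ y in ball z ρ, g y ≤ maxFun g x * volume (ball z ρ) := by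
  have hρ : 0 < ρ := dist_nonneg.trans_lt hx
  rw [← ENNReal.div_le_iff (measure_ball_pos _ _ hρ).ne' measure_ball_lt_top.ne]
  exact le_iSup_of_le z (le_iSup_of_le ρ (le_iSup_of_le hx le_rfl))

theorem maxFun_rpow_le {g : 𝔼 → ℝ≥0∞} (hg : AEMeasurable g) {s p : ℝ} (hs : 0 < s)
    (hsp : s ≤ p) (x : 𝔼) :
    maxFun (fun y => g y ^ s) x ≤ maxFun (fun y => g y ^ p) x ^ (s / p) := by
  have hθ : 0 ≤ s / p := div_nonneg hs.le (hs.le.trans hsp)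
  refine iSup_le fun z => iSup_le fun ρ => iSup_le fun hx => ?_
  have hρ : 0 < ρ := dist_nonneg.trans_lt hx
  set V := volume (ball z ρ)
  have hV : V ≠ 0 := (measure_ball_pos _ _ hρ).ne'
  have hV' : V ≠ ⊤ := measure_ball_lt_top.ne
  calc (∫⁻ y in ball z ρ, g y ^ s) / V
      ≤ (∫⁻ y in ball z ρ, g y ^ p) ^ (s / p) * V ^ (1 - s / p) / V := by
        gcongr; exact setLIntegral_rpow_le_rpow_mul_measure_rpow hg hs hsp _
    _ = ((∫⁻ y in ball z ρ, g y ^ p) / V) ^ (s / p) := by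
        generalize s / p = θ at hθ ⊢
        rw [ENNReal.div_rpow_of_nonneg _ _ hθ, div_eq_mul_inv, div_eq_mul_inv, mul_assoc,
          ← ENNReal.rpow_neg_one V, ← ENNReal.rpow_add _ _ hV hV', ← ENNReal.rpow_neg]
        ring_nf
    _ ≤ maxFun (fun y => g y ^ p) x ^ (s / p) :=
        ENNReal.rpow_le_rpow (le_iSup_of_le z (le_iSup_of_le ρ (le_iSup_of_le hx le_rfl))) hθ

theorem maxFun_rpow_le_of_maxFun_le {g : 𝔼 → ℝ≥0∞} (hg : AEMeasurable g) {s p : ℝ}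
    (hs : 0 < s) (hsp : s ≤ p) {x : 𝔼} {c : ℝ≥0∞}
    (h : maxFun (fun y => g y ^ p) x ≤ c * g x ^ p) :
    maxFun (fun y => g y ^ s) x ≤ c ^ (s / p) * g x ^ s := by
  have hθ : 0 ≤ s / p := div_nonneg hs.le (hs.le.trans hsp)
  refine (maxFun_rpow_le hg hs hsp x).trans ((ENNReal.rpow_le_rpow h hθ).trans_eq ?_)
  rw [ENNReal.mul_rpow_of_nonneg _ _ hθ, ← ENNReal.rpow_mul,
    mul_div_cancel₀ _ (hs.trans_le hsp).ne']

theorem setLIntegral_ball_le_of_maxFun_le {g : 𝔼 → ℝ≥0∞} {x : 𝔼} {M : ℝ}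
    (h : maxFun g x ≤ ENNReal.ofReal M) {ρ : ℝ} (hρ : 0 < ρ) :
    ∫⁻ y in ball x ρ, g y ≤ ENNReal.ofReal (M * unitBallVolume d * ρ ^ (d : ℝ)) := by
  refine (setLIntegral_ball_le_maxFun (mem_ball_self hρ)).trans ?_
  rw [volume_ball_eq x hρ, mul_assoc,
    ENNReal.ofReal_mul' (p := M) (mul_nonneg unitBallVolume_pos.le (by positivity))]
  exact mul_le_mul_left h _

theorem setLIntegral_ball_rpow_le_of_morrey_s9 {g : 𝔼 → ℝ≥0∞} (hg : AEMeasurable g)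
    {α s p A : ℝ} (hs : 0 < s) (hsp : s ≤ p) (hA : 0 ≤ A) {z : 𝔼}
    (hmorrey : ∀ ρ, 0 < ρ →
      ∫⁻ y in ball z ρ, g y ^ p ≤ ENNReal.ofReal (A ^ p * ρ ^ ((d : ℝ) - p * α)))
    {ρ : ℝ} (hρ : 0 < ρ) :
    ∫⁻ y in ball z ρ, g y ^ s ≤
      ENNReal.ofReal (unitBallVolume d ^ (1 - s / p) * A ^ s * ρ ^ ((d : ℝ) - s * α)) := by
  have hp : 0 < p := hs.trans_le hsp
  have hθ : 0 ≤ s / p := by positivity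
  have hθ' : 0 ≤ 1 - s / p := sub_nonneg.2 ((div_le_one hp).2 hsp)
  have hω := (unitBallVolume_pos (d := d)).le
  calc ∫⁻ y in ball z ρ, g y ^ s
      ≤ (∫⁻ y in ball z ρ, g y ^ p) ^ (s / p) * volume (ball z ρ) ^ (1 - s / p) :=
        setLIntegral_rpow_le_rpow_mul_measure_rpow hg hs hsp _
    _ ≤ ENNReal.ofReal (A ^ p * ρ ^ ((d : ℝ) - p * α)) ^ (s / p) *
          ENNReal.ofReal (unitBallVolume d * ρ ^ (d : ℝ)) ^ (1 - s / p) := by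
        rw [volume_ball_eq z hρ]; gcongr; exact hmorrey ρ hρ
    _ = ENNReal.ofReal (unitBallVolume d ^ (1 - s / p) * A ^ s * ρ ^ ((d : ℝ) - s * α)) := by
        rw [ENNReal.ofReal_rpow_of_nonneg (by positivity) hθ,
          ENNReal.ofReal_rpow_of_nonneg (by positivity) hθ', ← ENNReal.ofReal_mul (by positivity),
          Real.mul_rpow (by positivity) (by positivity), Real.mul_rpow hω (by positivity),
          ← Real.rpow_mul hA, ← Real.rpow_mul hρ.le, ← Real.rpow_mul hρ.le]
        congr 1
        rw [mul_div_cancel₀ _ hp.ne', mul_comm (unitBallVolume d ^ _), mul_assoc, mul_assoc,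
          ← mul_assoc (ρ ^ _), ← Real.rpow_add hρ,
          show ((d : ℝ) - p * α) * (s / p) + d * (1 - s / p) = d - s * α by field_simp; ring]
        ring

theorem riesz_mono_ae {α : ℝ} {f g : 𝔼 → ℝ≥0∞} (h : f ≤ᵐ[volume] g) (x : 𝔼) :
    riesz α f x ≤ riesz α g x :=
  lintegral_mono_ae <| ((measurePreserving_add_left volume x).quasiMeasurePreserving.ae h).mono
    fun _ hy => mul_le_mul_left hy _

theorem riesz_const_mul {α : ℝ} (f : 𝔼 → ℝ≥0∞) {c : ℝ≥0∞} (hc : c ≠ ⊤) (x : 𝔼) :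
    riesz α (fun y => c * f y) x = c * riesz α f x := by
  simp only [riesz, mul_assoc]
  exact lintegral_const_mul' c _ hc

theorem setLIntegral_ball_zero_comp_add (g : 𝔼 → ℝ≥0∞) (x : 𝔼) (ρ : ℝ) :
    ∫⁻ y in ball 0 ρ, g (x + y) = ∫⁻ y in ball x ρ, g y := by
  have hpre : (x + ·) ⁻¹' ball x ρ = ball 0 ρ := by simp [preimage_add_ball]
  rw [← hpre]
  exact (measurePreserving_add_left volume x).setLIntegral_comp_preimage_emb
    (MeasurableEquiv.addLeft x).measurableEmbedding g _

theorem setLIntegral_annulus_le_s9 {α : ℝ} (hαd : α ≤ d) (g : 𝔼 → ℝ≥0∞) (x : 𝔼) {ρ : ℝ}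
    (hρ : 0 < ρ) :
    ∫⁻ y in ball 0 (2 * ρ) \ ball 0 ρ, g (x + y) * ENNReal.ofReal (‖y‖ ^ (α - d)) ≤
      ENNReal.ofReal (ρ ^ (α - d)) * ∫⁻ y in ball x (2 * ρ), g y := by
  calc ∫⁻ y in ball 0 (2 * ρ) \ ball 0 ρ, g (x + y) * ENNReal.ofReal (‖y‖ ^ (α - d))
      ≤ ∫⁻ y in ball 0 (2 * ρ) \ ball 0 ρ, ENNReal.ofReal (ρ ^ (α - d)) * g (x + y) := by
        refine setLIntegral_mono' (measurableSet_ball.diff measurableSet_ball) fun y hy => ?_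
        rw [mul_comm]
        refine mul_le_mul_left (ENNReal.ofReal_le_ofReal ?_) _
        exact Real.rpow_le_rpow_of_nonpos hρ (by simpa using hy.2) (by linarith)
    _ ≤ ENNReal.ofReal (ρ ^ (α - d)) * ∫⁻ y in ball 0 (2 * ρ), g (x + y) := by
        rw [lintegral_const_mul' _ _ ENNReal.ofReal_ne_top]
        gcongr
        exact Set.sdiff_subset
    _ = ENNReal.ofReal (ρ ^ (α - d)) * ∫⁻ y in ball x (2 * ρ), g y := by
        rw [setLIntegral_ball_zero_comp_add]

theorem setLIntegral_riesz_kernel_le_of_subset_annuli {α β K a c : ℝ} (hαd : α ≤ d)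
    (hK : 0 ≤ K) (ha : 0 < a) (hc : 0 < c) (hq : c ^ (α - β) < 1) {g : 𝔼 → ℝ≥0∞} {x : 𝔼}
    (hgrowth : ∀ ρ, 0 < ρ → ∫⁻ y in ball x ρ, g y ≤ ENNReal.ofReal (K * ρ ^ ((d : ℝ) - β)))
    {S : Set 𝔼} (hS : S ⊆ ⋃ k : ℕ, ball 0 (2 * (a * c ^ k)) \ ball 0 (a * c ^ k)) :
    ∫⁻ y in S, g (x + y) * ENNReal.ofReal (‖y‖ ^ (α - d)) ≤
      ENNReal.ofReal (2 ^ ((d : ℝ) - β) * K * a ^ (α - β) / (1 - c ^ (α - β))) := by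
  calc ∫⁻ y in S, g (x + y) * ENNReal.ofReal (‖y‖ ^ (α - d))
      ≤ ∑' k : ℕ, ∫⁻ y in ball 0 (2 * (a * c ^ k)) \ ball 0 (a * c ^ k),
          g (x + y) * ENNReal.ofReal (‖y‖ ^ (α - d)) :=
        (lintegral_mono_set hS).trans (lintegral_iUnion_le _ _)
    _ ≤ ∑' k : ℕ, ENNReal.ofReal (2 ^ ((d : ℝ) - β) * K * a ^ (α - β) * (c ^ (α - β)) ^ k) := by
        refine ENNReal.tsum_le_tsum fun k => ?_
        have hρ : 0 < a * c ^ k := by positivity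
        refine (setLIntegral_annulus_le_s9 hαd g x hρ).trans
          ((mul_le_mul_right (hgrowth _ (by positivity)) _).trans_eq ?_)
        rw [← ENNReal.ofReal_mul (by positivity)]
        congr 1
        have hexp : (a * c ^ k) ^ (α - d) * (a * c ^ k) ^ ((d : ℝ) - β) =
            a ^ (α - β) * (c ^ (α - β)) ^ k := by
          rw [← Real.rpow_add hρ, sub_add_sub_cancel, Real.mul_rpow ha.le (by positivity),
            Real.rpow_pow_comm hc.le]
        rw [Real.mul_rpow zero_le_two hρ.le, mul_assoc _ (a ^ _), ← hexp]
        ring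
    _ = ENNReal.ofReal (2 ^ ((d : ℝ) - β) * K * a ^ (α - β) / (1 - c ^ (α - β))) :=
        tsum_ofReal_mul_pow_s9 (by positivity) (by positivity) hq

theorem setLIntegral_ball_riesz_kernel_le {α β K : ℝ} (hαd : α < d) (hβα : β < α) (hK : 0 ≤ K)
    {g : 𝔼 → ℝ≥0∞} {x : 𝔼}
    (hgrowth : ∀ ρ, 0 < ρ → ∫⁻ y in ball x ρ, g y ≤ ENNReal.ofReal (K * ρ ^ ((d : ℝ) - β)))
    {δ : ℝ} (hδ : 0 < δ) :
    ∫⁻ y in ball 0 δ, g (x + y) * ENNReal.ofReal (‖y‖ ^ (α - d)) ≤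
      ENNReal.ofReal (2 ^ ((d : ℝ) - β) / (2 ^ (α - β) - 1) * K * δ ^ (α - β)) := by
  have hcover : ball (0 : 𝔼) δ \ {0} ⊆
      ⋃ k : ℕ, ball 0 (2 * (δ / 2 * (1 / 2) ^ k)) \ ball 0 (δ / 2 * (1 / 2) ^ k) := by
    rintro y ⟨hy, hy0⟩
    obtain ⟨k, h₁, h₂⟩ :=
      exists_nat_half_pow_le_lt (norm_pos_iff.2 hy0) (mem_ball_zero_iff.1 hy)
    exact Set.mem_iUnion.2 ⟨k, by simpa using h₂, by simpa using h₁⟩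
  have h2 : 1 < (2 : ℝ) ^ (α - β) := Real.one_lt_rpow one_lt_two (by linarith)
  -- the kernel vanishes at the origin: `0 ^ (α - d) = 0` since `α ≠ d`
  calc ∫⁻ y in ball 0 δ, g (x + y) * ENNReal.ofReal (‖y‖ ^ (α - d))
      ≤ ∫⁻ y in ball 0 δ \ {0} ∪ {0}, g (x + y) * ENNReal.ofReal (‖y‖ ^ (α - d)) :=
        lintegral_mono_set (Set.subset_sdiff_union _ _)
    _ ≤ ∫⁻ y in ball 0 δ \ {0}, g (x + y) * ENNReal.ofReal (‖y‖ ^ (α - d)) := by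
        refine (lintegral_union_le _ _ _).trans_eq ?_
        rw [lintegral_singleton, norm_zero, Real.zero_rpow (sub_ne_zero.2 hαd.ne),
          ENNReal.ofReal_zero, mul_zero, zero_mul, add_zero]
    _ ≤ ENNReal.ofReal (2 ^ ((d : ℝ) - β) * K * (δ / 2) ^ (α - β) / (1 - (1 / 2) ^ (α - β))) :=
        setLIntegral_riesz_kernel_le_of_subset_annuli hαd.le hK (by positivity) (by norm_num)
          (Real.rpow_lt_one (by norm_num) (by norm_num) (by linarith)) hgrowth hcover
    _ = ENNReal.ofReal (2 ^ ((d : ℝ) - β) / (2 ^ (α - β) - 1) * K * δ ^ (α - β)) := by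
        rw [Real.div_rpow hδ.le zero_le_two, Real.div_rpow zero_le_one zero_le_two,
          Real.one_rpow]
        congr 1
        field_simp [(sub_pos.2 h2).ne']

theorem setLIntegral_compl_ball_riesz_kernel_le {α β K : ℝ} (hαd : α ≤ d) (hαβ : α < β)
    (hK : 0 ≤ K) {g : 𝔼 → ℝ≥0∞} {x : 𝔼}
    (hgrowth : ∀ ρ, 0 < ρ → ∫⁻ y in ball x ρ, g y ≤ ENNReal.ofReal (K * ρ ^ ((d : ℝ) - β)))
    {δ : ℝ} (hδ : 0 < δ) :
    ∫⁻ y in (ball 0 δ)ᶜ, g (x + y) * ENNReal.ofReal (‖y‖ ^ (α - d)) ≤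
      ENNReal.ofReal (2 ^ ((d : ℝ) - β) / (1 - 2 ^ (α - β)) * K * δ ^ (α - β)) := by
  have hcover : (ball (0 : 𝔼) δ)ᶜ ⊆
      ⋃ k : ℕ, ball 0 (2 * (δ * 2 ^ k)) \ ball 0 (δ * 2 ^ k) := by
    intro y hy
    obtain ⟨k, h₁, h₂⟩ := exists_nat_two_pow_le_lt hδ (by simpa using hy)
    exact Set.mem_iUnion.2 ⟨k, by simpa using h₂, by simpa using h₁⟩
  refine (setLIntegral_riesz_kernel_le_of_subset_annuli hαd hK hδ two_pos
    (Real.rpow_lt_one_of_one_lt_of_neg one_lt_two (by linarith)) hgrowth hcover).trans_eq ?_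
  congr 1
  ring

theorem riesz_le_of_ball_growth {α β : ℝ} (hα : 0 < α) (hαd : α < d) (hαβ : α < β) :
    ∃ N : ℝ, 0 < N ∧ ∀ (g : 𝔼 → ℝ≥0∞) (x : 𝔼) (K₀ K₁ : ℝ), 0 ≤ K₀ → 0 ≤ K₁ →
      (∀ ρ, 0 < ρ → ∫⁻ y in ball x ρ, g y ≤ ENNReal.ofReal (K₀ * ρ ^ (d : ℝ))) →
      (∀ ρ, 0 < ρ → ∫⁻ y in ball x ρ, g y ≤ ENNReal.ofReal (K₁ * ρ ^ ((d : ℝ) - β))) →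
      riesz α g x ≤ ENNReal.ofReal (N * K₀ ^ (1 - α / β) * K₁ ^ (α / β)) := by
  set c₀ : ℝ := 2 ^ (d : ℝ) / (2 ^ α - 1)
  set c₁ : ℝ := 2 ^ ((d : ℝ) - β) / (1 - 2 ^ (α - β))
  have hc₀ : 0 < c₀ := div_pos (by positivity) (sub_pos.2 (Real.one_lt_rpow one_lt_two hα))
  have hc₁ : 0 < c₁ := div_pos (by positivity)
    (sub_pos.2 (Real.rpow_lt_one_of_one_lt_of_neg one_lt_two (by linarith)))
  refine ⟨2 * c₀ ^ (1 - α / β) * c₁ ^ (α / β), by positivity,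
    fun g x K₀ K₁ hK₀ hK₁ h₀ h₁ => ?_⟩
  have hsplit : ∀ δ, 0 < δ →
      riesz α g x ≤ ENNReal.ofReal (c₀ * K₀ * δ ^ α + c₁ * K₁ * δ ^ (α - β)) := by
    intro δ hδ
    have hnear := setLIntegral_ball_riesz_kernel_le hαd hα hK₀
      (fun ρ hρ => by simpa using h₀ ρ hρ) hδ
    simp only [sub_zero] at hnear
    rw [riesz, ← lintegral_add_compl _ measurableSet_ball,
      ENNReal.ofReal_add (by positivity) (by positivity)]
    exact add_le_add hnear (setLIntegral_compl_ball_riesz_kernel_le hαd.le hαβ hK₁ h₁ hδ)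
  refine (le_ofReal_of_forall_le_add_rpow (by positivity) (by positivity) hα hαβ hsplit).trans_eq ?_
  rw [Real.mul_rpow hc₀.le hK₀, Real.mul_rpow hc₁.le hK₁]
  ring_nf

theorem riesz_rpow_le_of_morrey_of_maxFun_le {α p s : ℝ} (hα : 0 < α) (hαd : α < d)
    (hs : 1 < s) (hsp : s ≤ p) (C : ℝ) :
    ∃ N : ℝ, 0 < N ∧ ∀ b : 𝔼 → ℝ, Measurable b → (∀ x, 0 ≤ b x) → ∀ A : ℝ, 0 ≤ A →
      (∀ (x : 𝔼) (ρ : ℝ), 0 < ρ →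
        ∫⁻ y in ball x ρ, ENNReal.ofReal (b y ^ p) ≤
          ENNReal.ofReal (A ^ p * ρ ^ ((d : ℝ) - p * α))) →
      (∀ᵐ x ∂(volume : Measure 𝔼),
        maxFun (fun y => ENNReal.ofReal (b y ^ p)) x ≤ ENNReal.ofReal (C * b x ^ p)) →
      ∀ᵐ x ∂(volume : Measure 𝔼),
        riesz α (fun y => ENNReal.ofReal (b y ^ s)) x ≤ ENNReal.ofReal (N * A * b x ^ (s - 1)) := by
  have hs0 : 0 < s := one_pos.trans hs
  have hp : 0 < p := hs0.trans_le hsp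
  have hθ : α / (s * α) = 1 / s := by field_simp
  obtain ⟨N₀, hN₀, hedberg⟩ := riesz_le_of_ball_growth hα hαd (β := s * α) (by nlinarith)
  rw [hθ] at hedberg
  set ω := unitBallVolume d
  have hω : 0 < ω := unitBallVolume_pos
  set C' := max C 1
  have hC' : 0 < C' := lt_max_of_lt_right one_pos
  refine ⟨N₀ * (C' ^ (s / p) * ω) ^ (1 - 1 / s) * (ω ^ (1 - s / p)) ^ (1 / s), by positivity,
    fun b hb hb0 A hA hmorrey hA₁ => ?_⟩
  have hg : AEMeasurable fun y => ENNReal.ofReal (b y) := hb.ennreal_ofReal.aemeasurable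
  have hgpow : ∀ t : ℝ, 0 ≤ t →
      (fun y => ENNReal.ofReal (b y ^ t)) = fun y => ENNReal.ofReal (b y) ^ t :=
    fun t ht => funext fun y => (ENNReal.ofReal_rpow_of_nonneg (hb0 y) ht).symm
  rw [hgpow p hp.le] at hmorrey hA₁
  rw [hgpow s hs0.le]
  filter_upwards [hA₁] with x hx
  have hbx := hb0 x
  have hM : maxFun (fun y => ENNReal.ofReal (b y) ^ s) x ≤
      ENNReal.ofReal (C' ^ (s / p) * b x ^ s) := by
    refine (maxFun_rpow_le_of_maxFun_le hg hs0 hsp (c := ENNReal.ofReal C') ?_).trans_eq ?_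
    · rw [ENNReal.ofReal_rpow_of_nonneg hbx hp.le, ← ENNReal.ofReal_mul hC'.le]
      exact hx.trans (ENNReal.ofReal_le_ofReal
        (mul_le_mul_of_nonneg_right (le_max_left _ _) (by positivity)))
    · rw [ENNReal.ofReal_rpow_of_nonneg hC'.le (by positivity),
        ENNReal.ofReal_rpow_of_nonneg hbx hs0.le, ← ENNReal.ofReal_mul (by positivity)]
  refine (hedberg _ x (C' ^ (s / p) * b x ^ s * ω) (ω ^ (1 - s / p) * A ^ s) (by positivity)
    (by positivity) (fun ρ hρ => setLIntegral_ball_le_of_maxFun_le hM hρ)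
    (fun ρ hρ => setLIntegral_ball_rpow_le_of_morrey_s9 hg hs0 hsp hA (hmorrey x) hρ)).trans_eq ?_
  congr 1
  have hs' : s * (1 - 1 / s) = s - 1 := by field_simp
  rw [Real.mul_rpow (x := C' ^ (s / p) * b x ^ s) (by positivity) hω.le,
    Real.mul_rpow (x := C' ^ (s / p)) (y := b x ^ s) (by positivity) (by positivity),
    Real.mul_rpow (x := C' ^ (s / p)) (y := ω) (by positivity) hω.le,
    Real.mul_rpow (x := ω ^ (1 - s / p)) (by positivity) (by positivity),
    ← Real.rpow_mul hbx, ← Real.rpow_mul hA, hs', mul_one_div_cancel hs0.ne', Real.rpow_one]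
  ring

end Euclidean

theorem iterated_riesz_bound_general
    (d : ℕ) (α r p : ℝ) (hα0 : 0 < α) (hαd : α < d)
    (hr : 1 < r)
    (γ r' : ℝ) (hγ : 0 < γ) (hr' : r' = r / (r - 1))
    (hγ1 : (1 + γ) * r ≤ p) (hγ2 : 1 + γ * r' ≤ p)
    (C : ℝ) :
    ∃ N : ℝ, 0 < N ∧
      ∀ b : EuclideanSpace ℝ (Fin d) → ℝ, Measurable b → (∀ x, 0 ≤ b x) →
      ∀ A : ℝ, 0 ≤ A →
      (∀ (x : EuclideanSpace ℝ (Fin d)) (ρ : ℝ), 0 < ρ →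
        ∫⁻ y in ball x ρ, ENNReal.ofReal (b y ^ p) ≤
          ENNReal.ofReal (A ^ p * ρ ^ ((d : ℝ) - p * α))) →
      (∀ᵐ x ∂(volume : Measure (EuclideanSpace ℝ (Fin d))),
        maxFun (fun y => ENNReal.ofReal (b y ^ p)) x ≤
          ENNReal.ofReal (C * b x ^ p)) →
      ∀ᵐ x ∂(volume : Measure (EuclideanSpace ℝ (Fin d))),
        riesz α (fun y =>
            (riesz α (fun z => ENNReal.ofReal (b z ^ ((1 + γ) * r))) y) ^
              (1 / (r - 1))) x ≤
          ENNReal.ofReal (N * b x ^ (γ * r') * A ^ r') := by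
  have hr1 : 0 < r - 1 := by linarith
  have hr'pos : 0 < r' := by rw [hr']; positivity
  have hexp : ((1 + γ) * r - 1) * (1 / (r - 1)) = 1 + γ * r' := by
    rw [hr']; field_simp; ring
  obtain ⟨N₁, hN₁, H₁⟩ :=
    riesz_rpow_le_of_morrey_of_maxFun_le hα0 hαd (by nlinarith) hγ1 C
  obtain ⟨N₂, hN₂, H₂⟩ :=
    riesz_rpow_le_of_morrey_of_maxFun_le hα0 hαd (by nlinarith) hγ2 C
  refine ⟨N₁ ^ (1 / (r - 1)) * N₂, by positivity, fun b hb hb0 A hA hmorrey hA₁ => ?_⟩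
  set c := (N₁ * A) ^ (1 / (r - 1))
  have hinner : ∀ᵐ y ∂(volume : Measure (EuclideanSpace ℝ (Fin d))),
      riesz α (fun z => ENNReal.ofReal (b z ^ ((1 + γ) * r))) y ^ (1 / (r - 1)) ≤
        ENNReal.ofReal c * ENNReal.ofReal (b y ^ (1 + γ * r')) := by
    filter_upwards [H₁ b hb hb0 A hA hmorrey hA₁] with y hy
    rw [← hexp]
    exact rpow_le_of_le_ofReal_mul_rpow (by positivity) (hb0 y) (by positivity) hy
  filter_upwards [H₂ b hb hb0 A hA hmorrey hA₁] with x hx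
  have hc : c = N₁ ^ (1 / (r - 1)) * A ^ (1 / (r - 1)) := Real.mul_rpow hN₁.le hA
  have hA' : A ^ (1 / (r - 1)) * A = A ^ r' := by
    rw [← Real.rpow_add_one' hA (by positivity), hr']; congr 1; field_simp; ring
  calc _ ≤ riesz α (fun y => ENNReal.ofReal c * ENNReal.ofReal (b y ^ (1 + γ * r'))) x :=
        riesz_mono_ae hinner x
    _ = ENNReal.ofReal c * riesz α (fun y => ENNReal.ofReal (b y ^ (1 + γ * r'))) x :=
        riesz_const_mul _ ENNReal.ofReal_ne_top x
    _ ≤ ENNReal.ofReal c * ENNReal.ofReal (N₂ * A * b x ^ (1 + γ * r' - 1)) :=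
        mul_le_mul_right hx _
    _ = ENNReal.ofReal (N₁ ^ (1 / (r - 1)) * N₂ * b x ^ (γ * r') * A ^ r') := by
        rw [← ENNReal.ofReal_mul (by positivity), add_sub_cancel_left, ← hA', hc]
        ring_nf

/-- **Key estimate (0.4).** Under the Morrey condition and the `A_1` assumption
`𝕄(b^p) ≤ C b^p` a.e., one has a.e.
`R_α[(R_α(b^((1+γ)r)))^(1/(r-1))] ≤ N b^(γr') A^(r')` with `N = N(α,d,r,p,γ,C)`. -/
theorem iterated_riesz_bound
    (d : ℕ) (hd : 1 ≤ d) (α r p : ℝ) (hα0 : 0 < α) (hαd : α < d)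
    (hαr : α ≤ r) (hr : 1 < r) (hrp : r < p) (hpd : p ≤ d)
    (γ r' : ℝ) (hγ : 0 < γ) (hr' : r' = r / (r - 1))
    (hγ1 : (1 + γ) * r ≤ p) (hγ2 : 1 + γ * r' ≤ p) (hγ3 : 1 + γ ≤ r)
    (C : ℝ) :
    ∃ N : ℝ, 0 < N ∧
      ∀ b : EuclideanSpace ℝ (Fin d) → ℝ, Measurable b → (∀ x, 0 ≤ b x) →
      ∀ A : ℝ, 0 ≤ A →
      (∀ (x : EuclideanSpace ℝ (Fin d)) (ρ : ℝ), 0 < ρ →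
        ∫⁻ y in ball x ρ, ENNReal.ofReal (b y ^ p) ≤
          ENNReal.ofReal (A ^ p * ρ ^ ((d : ℝ) - p * α))) →
      (∀ᵐ x ∂(volume : Measure (EuclideanSpace ℝ (Fin d))),
        maxFun (fun y => ENNReal.ofReal (b y ^ p)) x ≤
          ENNReal.ofReal (C * b x ^ p)) →
      ∀ᵐ x ∂(volume : Measure (EuclideanSpace ℝ (Fin d))),
        riesz α (fun y =>
            (riesz α (fun z => ENNReal.ofReal (b z ^ ((1 + γ) * r))) y) ^
              (1 / (r - 1))) x ≤
          ENNReal.ofReal (N * b x ^ (γ * r') * A ^ r') :=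
  iterated_riesz_bound_general d α r p hα0 hαd hr γ r' hγ hr' hγ1 hγ2 C
end

section
/- Let d ≥ 1 be an integer, α ∈ (0, d), and let r, p satisfy α ≤ r, 1 < r < p ≤ d. Set p_0 = (r+p)/2 and p_1 = (r+p_0)/2. Let b : ℝ^d → [0,∞) be measurable and A ≥ 0 satisfy ∫_B b^p dx ≤ A^p ρ^{d - pα} for every ρ > 0 and every ball B of radius ρ. Define b̃ = (𝕄(b^{p_0}))^{1/p_0}. Then for every x ∈ ℝ^d and ρ > 0, ∫_{B_ρ(x)} b̃^{p_1} dy ≤ N ρ^{d - p_1 α} A^{p_1}, i.e. b̃ satisfies the Morrey condition with exponent p_1 and constant N^{1/p_1} A, where N depends only on α, d, r, p. -/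
/-!
Hölder's inequality turns the Morrey bound for `b ^ p` into one for `g = b ^ p₀` with exponent
`d - p₀ α`. For `y ∈ B_ρ(x)`, the averages of `g` over balls of radius `> ρ` through `y` are at most
a constant times `λ = A ^ p₀ ρ ^ (-p₀ α)`, while the smaller ones lie in `B_{3ρ}(x)`; hence
`𝕄 g ≤ 𝕄 (g 1_{B_{3ρ}(x)}) + C λ` on `B_ρ(x)`. For `θ = p₁ / p₀ < 1`, Kolmogorov's inequality
`∫_S (𝕄 h) ^ θ ≤ λ ^ θ |S| + C ‖h‖₁ λ ^ (θ - 1)`, a consequence of the weak type `(1, 1)` bound,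
applied to `h = g 1_{B_{3ρ}(x)}` then bounds both terms by multiples of `A ^ p₁ ρ ^ (d - p₁ α)`.
-/

open MeasureTheory Metric ENNReal
open scoped FourierTransform

lemma ENNReal.rpow_le_add_tsum_indicator_dyadic {t l : ℝ≥0∞} (hl0 : l ≠ 0) (hl : l ≠ ∞)
    {θ : ℝ} (hθ : 0 < θ) :
    t ^ θ ≤
      l ^ θ + ∑' k : ℕ, (Set.Ioi (2 ^ k * l)).indicator (fun _ => (2 ^ (k + 1) * l) ^ θ) t := by
  rcases le_or_gt t l with htl | hlt
  · exact le_add_right (ENNReal.rpow_le_rpow htl hθ.le)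
  refine le_add_left ?_
  rcases eq_or_ne t ∞ with rfl | htop
  · have hterm : ∀ k : ℕ, l ^ θ ≤
        (Set.Ioi (2 ^ k * l)).indicator (fun _ => (2 ^ (k + 1) * l) ^ θ) ∞ := fun k => by
      rw [Set.indicator_of_mem (show ∞ ∈ Set.Ioi (2 ^ k * l) from
        ENNReal.mul_lt_top (by simp) hl.lt_top)]
      exact ENNReal.rpow_le_rpow (le_mul_of_one_le_left' (one_le_pow₀ one_le_two)) hθ.le
    calc ∞ ^ θ = ∑' _ : ℕ, l ^ θ := by
          rw [ENNReal.top_rpow_of_pos hθ, ENNReal.tsum_const_eq_top_of_ne_zero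
            (ENNReal.rpow_pos_of_nonneg (pos_iff_ne_zero.2 hl0) hθ.le).ne']
      _ ≤ _ := ENNReal.tsum_le_tsum hterm
  have hex : ∃ n : ℕ, t ≤ 2 ^ (n + 1) * l := by
    obtain ⟨n, hn⟩ := ENNReal.exists_nat_gt (ENNReal.div_ne_top htop hl0)
    refine ⟨n, (ENNReal.div_le_iff_le_mul (Or.inl hl0) (Or.inl hl)).1 (hn.le.trans ?_)⟩
    exact_mod_cast (Nat.lt_two_pow_self.trans (Nat.pow_lt_pow_succ Nat.one_lt_two)).le
  classical
  obtain ⟨n, hn, hmin⟩ : ∃ n, t ≤ 2 ^ (n + 1) * l ∧ ∀ m < n, ¬ t ≤ 2 ^ (m + 1) * l :=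
    ⟨Nat.find hex, Nat.find_spec hex, fun _ => Nat.find_min hex⟩
  have hlow : 2 ^ n * l < t := by
    cases n with
    | zero => simpa using hlt
    | succ m => exact not_le.1 (hmin m m.lt_succ_self)
  calc t ^ θ ≤ (2 ^ (n + 1) * l) ^ θ := ENNReal.rpow_le_rpow hn hθ.le
    _ = (Set.Ioi (2 ^ n * l)).indicator (fun _ => (2 ^ (n + 1) * l) ^ θ) t :=
        (Set.indicator_of_mem (show t ∈ Set.Ioi (2 ^ n * l) from hlow)
          (fun _ => (2 ^ (n + 1) * l) ^ θ)).symm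
    _ ≤ _ := ENNReal.le_tsum n

lemma setLIntegral_rpow_le {α : Type*} [MeasurableSpace α] {μ : Measure α} {f : α → ℝ≥0∞}
    (hf : AEMeasurable f μ) {θ : ℝ} (hθ0 : 0 < θ) (hθ1 : θ < 1) (S : Set α) :
    ∫⁻ y in S, f y ^ θ ∂μ ≤ (∫⁻ y in S, f y ∂μ) ^ θ * μ S ^ (1 - θ) := by
  have hpq : (1 / θ).HolderConjugate (1 / (1 - θ)) :=
    Real.holderConjugate_iff.2 ⟨by rw [lt_div_iff₀ hθ0, one_mul]; exact hθ1, by simp⟩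
  have h := ENNReal.lintegral_mul_le_Lp_mul_Lq (μ.restrict S) hpq
    (hf.restrict.pow_const θ) (aemeasurable_const (b := (1 : ℝ≥0∞)))
  simpa [← ENNReal.rpow_mul, hθ0.ne'] using h

section MaximalFunction

variable {d : ℕ}

lemma setLIntegral_ball_div_le_maxFun (g : EuclideanSpace ℝ (Fin d) → ℝ≥0∞)
    {y z : EuclideanSpace ℝ (Fin d)} {s : ℝ} (hy : y ∈ ball z s) :
    (∫⁻ w in ball z s, g w) / volume (ball z s) ≤ maxFun g y :=
  le_iSup₂_of_le z s (le_iSup_of_le hy le_rfl)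

lemma lt_maxFun_iff (g : EuclideanSpace ℝ (Fin d) → ℝ≥0∞) (L : ℝ≥0∞)
    (y : EuclideanSpace ℝ (Fin d)) :
    L < maxFun g y ↔ ∃ z s, y ∈ ball z s ∧ L < (∫⁻ w in ball z s, g w) / volume (ball z s) := by
  simp only [maxFun, lt_iSup_iff, exists_prop]

lemma isOpen_setOf_lt_maxFun (g : EuclideanSpace ℝ (Fin d) → ℝ≥0∞) (L : ℝ≥0∞) :
    IsOpen {y | L < maxFun g y} := by
  have : {y | L < maxFun g y} = ⋃ (z) (s : ℝ)
      (_ : L < (∫⁻ w in ball z s, g w) / volume (ball z s)), ball z s := by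
    ext y
    simp only [Set.mem_ofPred_eq, Set.mem_iUnion, lt_maxFun_iff, exists_prop]
    tauto
  rw [this]
  exact isOpen_iUnion fun z => isOpen_iUnion fun s => isOpen_iUnion fun _ => isOpen_ball

lemma volume_ball_eq_s11 (z : EuclideanSpace ℝ (Fin d)) {s : ℝ} (hs : 0 < s) :
    volume (ball z s) = ENNReal.ofReal s ^ d * volume (ball (0 : EuclideanSpace ℝ (Fin d)) 1) := by
  rw [Measure.addHaar_ball_of_pos volume z hs, finrank_euclideanSpace_fin, ENNReal.ofReal_pow hs.le]

lemma volume_closedBall_mul_eq (z : EuclideanSpace ℝ (Fin d)) {s : ℝ} (hs : 0 < s) {τ : ℝ}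
    (hτ : 0 < τ) : volume (closedBall z (τ * s)) = ENNReal.ofReal τ ^ d * volume (ball z s) := by
  rw [Measure.addHaar_closedBall volume z (by positivity), volume_ball_eq_s11 z hs,
    finrank_euclideanSpace_fin, ENNReal.ofReal_pow (by positivity), ENNReal.ofReal_mul hτ.le,
    mul_pow, mul_assoc]

lemma exists_radius_le_of_volume_ball_le (hd : 1 ≤ d) {M : ℝ≥0∞} (hM : M ≠ ∞) :
    ∃ R, ∀ (z : EuclideanSpace ℝ (Fin d)) (s : ℝ), 0 < s → volume (ball z s) ≤ M → s ≤ R := by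
  set c := volume (ball (0 : EuclideanSpace ℝ (Fin d)) 1)
  have hc0 : c ≠ 0 := (measure_ball_pos volume 0 one_pos).ne'
  refine ⟨max 1 (M / c).toReal, fun z s hs hM' => ?_⟩
  rcases le_or_gt s 1 with hs1 | hs1
  · exact le_max_of_le_left hs1
  refine le_max_of_le_right ?_
  rw [← ENNReal.ofReal_le_iff_le_toReal (ENNReal.div_ne_top hM hc0),
    ENNReal.le_div_iff_mul_le (Or.inl hc0) (Or.inl measure_ball_lt_top.ne)]
  calc ENNReal.ofReal s * c ≤ ENNReal.ofReal s ^ d * c := by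
        gcongr
        exact le_self_pow₀ (ENNReal.one_le_ofReal.2 hs1.le) (by omega)
    _ = volume (ball z s) := (volume_ball_eq_s11 z hs).symm
    _ ≤ M := hM'

-- Vitali covering with enlargement factor `4`, hence the constant `4 ^ d`.
lemma volume_setOf_lt_maxFun_le (hd : 1 ≤ d) (g : EuclideanSpace ℝ (Fin d) → ℝ≥0∞)
    (hI : ∫⁻ y, g y ≠ ∞) {L : ℝ≥0∞} (hL0 : L ≠ 0) (hL : L ≠ ∞) :
    volume {y | L < maxFun g y} ≤ 4 ^ d * (∫⁻ y, g y) / L := by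
  set t : Set (EuclideanSpace ℝ (Fin d) × ℝ) :=
    {a | 0 < a.2 ∧ L * volume (ball a.1 a.2) < ∫⁻ w in ball a.1 a.2, g w}
  have hvol : ∀ a ∈ t, volume (ball a.1 a.2) ≤ (∫⁻ w in ball a.1 a.2, g w) / L := fun a ha => by
    rw [ENNReal.le_div_iff_mul_le (Or.inl hL0) (Or.inl hL), mul_comm]
    exact ha.2.le
  obtain ⟨R, hR⟩ := exists_radius_le_of_volume_ball_le hd (ENNReal.div_ne_top hI hL0)
  obtain ⟨u, hut, hdisj, hcov⟩ :=
    Vitali.exists_disjoint_subfamily_covering_enlargement_closedBall t Prod.fst Prod.snd R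
      (fun a ha => hR a.1 a.2 ha.1 ((hvol a ha).trans
        (ENNReal.div_le_div_right (setLIntegral_le_lintegral _ _) L)))
      4 (by norm_num)
  have : Countable u := (hdisj.countable_of_nonempty_interior fun a ha =>
    (nonempty_ball.2 (hut ha).1).mono ball_subset_interior_closedBall).to_subtype
  have hsub : {y | L < maxFun g y} ⊆ ⋃ a : u, closedBall a.1.1 (4 * a.1.2) := by
    intro y hy
    obtain ⟨z, s, hyz, havg⟩ := (lt_maxFun_iff g L y).1 hy
    have hs : 0 < s := pos_of_mem_ball hyz
    rw [ENNReal.lt_div_iff_mul_lt (Or.inl (measure_ball_pos volume _ hs).ne')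
      (Or.inl measure_ball_lt_top.ne)] at havg
    obtain ⟨a, hau, hza⟩ := hcov (z, s) ⟨hs, havg⟩
    exact Set.mem_iUnion.2 ⟨⟨a, hau⟩, hza (ball_subset_closedBall hyz)⟩
  have hdisj' : Pairwise (Function.onFun Disjoint fun a : u => ball a.1.1 a.1.2) :=
    fun a b hab => (hdisj a.2 b.2 (Subtype.coe_injective.ne hab)).mono
      ball_subset_closedBall ball_subset_closedBall
  calc volume {y | L < maxFun g y}
      ≤ ∑' a : u, volume (closedBall a.1.1 (4 * a.1.2)) :=
        (measure_mono hsub).trans (measure_iUnion_le _)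
    _ = ∑' a : u, 4 ^ d * volume (ball a.1.1 a.1.2) := by
        congr 1 with a
        rw [volume_closedBall_mul_eq _ (hut a.2).1 four_pos, ENNReal.ofReal_ofNat]
    _ ≤ ∑' a : u, 4 ^ d * ((∫⁻ w in ball a.1.1 a.1.2, g w) / L) := by
        gcongr with a
        exact hvol a (hut a.2)
    _ = 4 ^ d * (∫⁻ w in ⋃ a : u, ball a.1.1 a.1.2, g w) / L := by
        rw [lintegral_iUnion (fun _ => measurableSet_ball) hdisj', ENNReal.tsum_mul_left,
          mul_div_assoc]
        simp only [div_eq_mul_inv, ENNReal.tsum_mul_right]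
    _ ≤ 4 ^ d * (∫⁻ y, g y) / L := by
        gcongr
        exact Measure.restrict_le_self

/-- Kolmogorov's inequality, obtained by summing the weak type bound over the dyadic levels
`{2 ^ k * l < maxFun g}`. -/
lemma setLIntegral_maxFun_rpow_le (hd : 1 ≤ d) (g : EuclideanSpace ℝ (Fin d) → ℝ≥0∞)
    (hI : ∫⁻ y, g y ≠ ∞) {θ : ℝ} (hθ0 : 0 < θ) (S : Set (EuclideanSpace ℝ (Fin d)))
    {l : ℝ≥0∞} (hl0 : l ≠ 0) (hl : l ≠ ∞) :
    ∫⁻ y in S, maxFun g y ^ θ ≤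
      l ^ θ * volume S + 4 ^ d * 2 ^ θ * (1 - 2 ^ (θ - 1))⁻¹ * (∫⁻ y, g y) * l ^ (θ - 1) := by
  set U : ℕ → Set (EuclideanSpace ℝ (Fin d)) := fun k => {y | 2 ^ k * l < maxFun g y}
  have hU : ∀ k, MeasurableSet (U k) := fun k => (isOpen_setOf_lt_maxFun g _).measurableSet
  have hterm : ∀ (I : ℝ≥0∞) (k : ℕ), (2 ^ (k + 1) * l) ^ θ * (I / (2 ^ k * l)) =
      2 ^ θ * I * l ^ (θ - 1) * (2 ^ (θ - 1)) ^ k := fun I k => by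
    have h2k : ((2 : ℝ≥0∞) ^ (k + 1)) ^ θ = (2 ^ θ) ^ (k + 1) := by
      rw [← ENNReal.rpow_natCast, ← ENNReal.rpow_mul, mul_comm, ENNReal.rpow_mul,
        ENNReal.rpow_natCast]
    rw [ENNReal.mul_rpow_of_nonneg _ _ hθ0.le, h2k,
      ENNReal.rpow_sub _ _ two_ne_zero ENNReal.ofNat_ne_top, ENNReal.rpow_sub _ _ hl0 hl,
      ENNReal.rpow_one, ENNReal.rpow_one]
    simp only [div_eq_mul_inv, mul_pow, ← ENNReal.inv_pow]
    rw [ENNReal.mul_inv (Or.inl (by simp)) (Or.inl (by simp))]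
    ring
  calc ∫⁻ y in S, maxFun g y ^ θ
      ≤ ∫⁻ y in S, (l ^ θ + ∑' k, (U k).indicator (fun _ => (2 ^ (k + 1) * l) ^ θ) y) :=
        lintegral_mono fun y => ENNReal.rpow_le_add_tsum_indicator_dyadic hl0 hl hθ0
    _ = l ^ θ * volume S + ∑' k, (2 ^ (k + 1) * l) ^ θ * volume (U k ∩ S) := by
        rw [lintegral_add_left measurable_const, setLIntegral_const,
          lintegral_tsum fun k => (measurable_const.indicator (hU k)).aemeasurable]
        simp only [lintegral_indicator_const (hU _), Measure.restrict_apply (hU _)]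
    _ ≤ l ^ θ * volume S +
          ∑' k : ℕ, (2 ^ (k + 1) * l) ^ θ * (4 ^ d * (∫⁻ y, g y) / (2 ^ k * l)) := by
        gcongr with k
        exact (measure_mono Set.inter_subset_left).trans (volume_setOf_lt_maxFun_le hd g hI
          (mul_ne_zero (by simp) hl0) (ENNReal.mul_ne_top (by simp) hl))
    _ = l ^ θ * volume S +
          ∑' k : ℕ, 2 ^ θ * (4 ^ d * ∫⁻ y, g y) * l ^ (θ - 1) * (2 ^ (θ - 1)) ^ k := by
        simp only [hterm]
    _ = _ := by
        rw [ENNReal.tsum_mul_left, ENNReal.tsum_geometric]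
        ring

end MaximalFunction

section Morrey

variable {d : ℕ}

def HasMorreyBound (f : EuclideanSpace ℝ (Fin d) → ℝ≥0∞) (K : ℝ≥0∞) (β : ℝ) : Prop :=
  ∀ x (ρ : ℝ), 0 < ρ → ∫⁻ y in ball x ρ, f y ≤ K * ENNReal.ofReal ρ ^ β

variable {f g : EuclideanSpace ℝ (Fin d) → ℝ≥0∞} {K : ℝ≥0∞} {β : ℝ}

lemma hasMorreyBound_of_le_ofReal {A p : ℝ} (hA : 0 ≤ A) (hp : 0 ≤ p)
    (hf : ∀ x (ρ : ℝ), 0 < ρ → ∫⁻ y in ball x ρ, f y ≤ ENNReal.ofReal (A ^ p * ρ ^ β)) :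
    HasMorreyBound f (ENNReal.ofReal A ^ p) β := fun x ρ hρ => by
  rw [ENNReal.ofReal_rpow_of_nonneg hA hp, ENNReal.ofReal_rpow_of_pos hρ,
    ← ENNReal.ofReal_mul (by positivity)]
  exact hf x ρ hρ

lemma HasMorreyBound.rpow (hf : HasMorreyBound f K β) (hfm : AEMeasurable f) {θ : ℝ}
    (hθ0 : 0 < θ) (hθ1 : θ < 1) :
    HasMorreyBound (fun y => f y ^ θ)
      (K ^ θ * volume (ball (0 : EuclideanSpace ℝ (Fin d)) 1) ^ (1 - θ)) (θ * β + (1 - θ) * d) := by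
  intro x ρ hρ
  set r := ENNReal.ofReal ρ
  have hr0 : r ≠ 0 := (ENNReal.ofReal_pos.2 hρ).ne'
  calc ∫⁻ y in ball x ρ, f y ^ θ
      ≤ (∫⁻ y in ball x ρ, f y) ^ θ * volume (ball x ρ) ^ (1 - θ) :=
        setLIntegral_rpow_le hfm hθ0 hθ1 _
    _ ≤ (K * r ^ β) ^ θ * (r ^ d * volume (ball (0 : EuclideanSpace ℝ (Fin d)) 1)) ^ (1 - θ) := by
        rw [volume_ball_eq_s11 x hρ]
        gcongr
        exact hf x ρ hρ
    _ = _ := by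
        rw [ENNReal.mul_rpow_of_nonneg _ _ hθ0.le, ENNReal.mul_rpow_of_nonneg _ _ (by linarith),
          ← ENNReal.rpow_natCast, ← ENNReal.rpow_mul, ← ENNReal.rpow_mul,
          ENNReal.rpow_add _ _ hr0 ENNReal.ofReal_ne_top]
        ring_nf

lemma HasMorreyBound.maxFun_eq_zero (hg : HasMorreyBound g 0 β) (y : EuclideanSpace ℝ (Fin d)) :
    maxFun g y = 0 :=
  nonpos_iff_eq_zero.1 <| iSup₂_le fun z s => iSup_le fun hy => by
    rw [nonpos_iff_eq_zero.1 ((hg z s (pos_of_mem_ball hy)).trans_eq (zero_mul _)),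
      ENNReal.zero_div]

/-- Balls of radius `s ≤ ρ` through `y ∈ B_ρ(x)` lie in `B_{3ρ}(x)`; on larger balls the
averages of `g` are controlled by the Morrey bound. -/
lemma HasMorreyBound.maxFun_le_maxFun_indicator_add (hg : HasMorreyBound g K β) (hβ : β ≤ d)
    {x y : EuclideanSpace ℝ (Fin d)} {ρ : ℝ} (hy : y ∈ ball x ρ) :
    maxFun g y ≤ maxFun ((ball x (3 * ρ)).indicator g) y +
      K * (volume (ball (0 : EuclideanSpace ℝ (Fin d)) 1))⁻¹ * ENNReal.ofReal ρ ^ (β - d) := by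
  set c := volume (ball (0 : EuclideanSpace ℝ (Fin d)) 1)
  refine iSup₂_le fun z s => iSup_le fun hys => ?_
  have hs : 0 < s := pos_of_mem_ball hys
  rcases le_or_gt s ρ with hsρ | hρs
  · have hsub : ball z s ⊆ ball x (3 * ρ) := by
      refine ball_subset_ball' ?_
      linarith [dist_triangle z y x, dist_comm z y, mem_ball.1 hys, mem_ball.1 hy]
    rw [setLIntegral_congr_fun measurableSet_ball
      fun w hw => (Set.indicator_of_mem (hsub hw) g).symm]
    exact le_add_right (setLIntegral_ball_div_le_maxFun _ hys)
  refine le_add_left ?_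
  set r := ENNReal.ofReal s
  have hr0 : r ≠ 0 := (ENNReal.ofReal_pos.2 hs).ne'
  have hrd : r ^ d ≠ 0 := pow_ne_zero _ hr0
  calc (∫⁻ w in ball z s, g w) / volume (ball z s) ≤ K * r ^ β / (r ^ d * c) := by
        rw [volume_ball_eq_s11 z hs]
        exact ENNReal.div_le_div_right (hg z s hs) _
    _ = K * c⁻¹ * r ^ (β - d) := by
        rw [ENNReal.rpow_sub _ _ hr0 ENNReal.ofReal_ne_top, ENNReal.rpow_natCast]
        simp only [div_eq_mul_inv]
        rw [ENNReal.mul_inv (Or.inl hrd) (Or.inl (ENNReal.pow_ne_top ENNReal.ofReal_ne_top))]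
        ring
    _ ≤ K * c⁻¹ * ENNReal.ofReal ρ ^ (β - d) := by
        rw [← neg_sub, ENNReal.rpow_neg, ENNReal.rpow_neg]
        gcongr
        exact ENNReal.ofReal_le_ofReal hρs.le

lemma HasMorreyBound.setLIntegral_ball_maxFun_rpow_le (hd : 1 ≤ d) (hg : HasMorreyBound g K β)
    (hK : K ≠ ∞) (hβ : β ≤ d) {θ : ℝ} (hθ0 : 0 < θ) (hθ1 : θ < 1) (x : EuclideanSpace ℝ (Fin d))
    {ρ : ℝ} (hρ : 0 < ρ) {l : ℝ≥0∞} (hl0 : l ≠ 0) (hl : l ≠ ∞)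
    (hKl :
      K * (volume (ball (0 : EuclideanSpace ℝ (Fin d)) 1))⁻¹ * ENNReal.ofReal ρ ^ (β - d) ≤ l) :
    ∫⁻ y in ball x ρ, maxFun g y ^ θ ≤ 2 * l ^ θ * volume (ball x ρ) +
      4 ^ d * 2 ^ θ * (1 - 2 ^ (θ - 1))⁻¹ * (K * (3 * ENNReal.ofReal ρ) ^ β) * l ^ (θ - 1) := by
  set g₁ := (ball x (3 * ρ)).indicator g
  have hg₁ : ∫⁻ y, g₁ y ≤ K * (3 * ENNReal.ofReal ρ) ^ β := by
    rw [lintegral_indicator measurableSet_ball, ← ENNReal.ofReal_ofNat 3,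
      ← ENNReal.ofReal_mul (by norm_num)]
    exact hg x _ (by positivity)
  have hg₁' : ∫⁻ y, g₁ y ≠ ∞ := ne_top_of_le_ne_top
    (ENNReal.mul_ne_top hK (ENNReal.rpow_ne_top_of_ne_zero (by simp [hρ])
      (ENNReal.mul_ne_top (by simp) ENNReal.ofReal_ne_top))) hg₁
  calc ∫⁻ y in ball x ρ, maxFun g y ^ θ
      ≤ ∫⁻ y in ball x ρ, (maxFun g₁ y + l) ^ θ :=
        setLIntegral_mono' measurableSet_ball fun y hy => ENNReal.rpow_le_rpow
          ((hg.maxFun_le_maxFun_indicator_add hβ hy).trans (by gcongr)) hθ0.le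
    _ ≤ ∫⁻ y in ball x ρ, (maxFun g₁ y ^ θ + l ^ θ) :=
        lintegral_mono fun y => ENNReal.rpow_add_le_add_rpow _ _ hθ0.le hθ1.le
    _ = (∫⁻ y in ball x ρ, maxFun g₁ y ^ θ) + l ^ θ * volume (ball x ρ) := by
        rw [lintegral_add_right _ measurable_const, setLIntegral_const]
    _ ≤ (l ^ θ * volume (ball x ρ) + 4 ^ d * 2 ^ θ * (1 - 2 ^ (θ - 1))⁻¹ *
          (K * (3 * ENNReal.ofReal ρ) ^ β) * l ^ (θ - 1)) + l ^ θ * volume (ball x ρ) := by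
        gcongr
        exact (setLIntegral_maxFun_rpow_le hd g₁ hg₁' hθ0 _ hl0 hl).trans (by gcongr)
    _ = _ := by ring

lemma exists_hasMorreyBound_maxFun_rpow (hd : 1 ≤ d) {θ β : ℝ} (hθ0 : 0 < θ) (hθ1 : θ < 1)
    (hβ : β ≤ d) : ∃ C : ℝ≥0∞, C ≠ ∞ ∧ ∀ (g : EuclideanSpace ℝ (Fin d) → ℝ≥0∞) (K : ℝ≥0∞),
      K ≠ ∞ → HasMorreyBound g K β →
        HasMorreyBound (fun y => maxFun g y ^ θ) (C * K ^ θ) (θ * β + (1 - θ) * d) := by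
  set c := volume (ball (0 : EuclideanSpace ℝ (Fin d)) 1)
  have hc0 : c ≠ 0 := (measure_ball_pos volume 0 one_pos).ne'
  have hc : c ≠ ∞ := measure_ball_lt_top.ne
  set Ckol : ℝ≥0∞ := 4 ^ d * 2 ^ θ * (1 - 2 ^ (θ - 1))⁻¹
  have hCkol : Ckol ≠ ∞ := by
    have : (2 : ℝ≥0∞) ^ (θ - 1) < 1 :=
      ENNReal.rpow_lt_one_of_one_lt_of_neg one_lt_two (by linarith)
    simp [Ckol, ENNReal.mul_eq_top, tsub_eq_zero_iff_le, not_le.2 this]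
  refine ⟨(2 + Ckol * 3 ^ β) * c ^ (1 - θ), by finiteness, fun g K hK hg x ρ hρ => ?_⟩
  rcases eq_or_ne K 0 with rfl | hK0
  · simp [hg.maxFun_eq_zero, ENNReal.zero_rpow_of_pos hθ0]
  set r := ENNReal.ofReal ρ
  have hr0 : r ≠ 0 := (ENNReal.ofReal_pos.2 hρ).ne'
  have hr : r ≠ ∞ := ENNReal.ofReal_ne_top
  set l := K * c⁻¹ * r ^ (β - d)
  have hl0 : l ≠ 0 := by simp [l, hK0, hc, hr, hr0, ENNReal.rpow_eq_zero_iff]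
  have hl : l ≠ ∞ := by simp [l, hK, hc0, ENNReal.mul_eq_top, ENNReal.rpow_ne_top_of_ne_zero hr0 hr]
  -- `l` is chosen so that both terms of the localized Kolmogorov bound are of the same order
  have hsmall : l ^ θ * volume (ball x ρ) = c ^ (1 - θ) * K ^ θ * r ^ (θ * β + (1 - θ) * d) := by
    rw [volume_ball_eq_s11 x hρ, ENNReal.mul_rpow_of_nonneg _ _ hθ0.le,
      ENNReal.mul_rpow_of_nonneg _ _ hθ0.le, ← ENNReal.rpow_mul, ENNReal.inv_rpow,
      ENNReal.rpow_sub _ _ hc0 hc, ENNReal.rpow_one, ← ENNReal.rpow_natCast r d,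
      show θ * β + (1 - θ) * d = (β - d) * θ + d by ring, ENNReal.rpow_add _ _ hr0 hr]
    simp only [div_eq_mul_inv]
    ring
  have hlarge : K * (3 * r) ^ β * l ^ (θ - 1) =
      3 ^ β * (c ^ (1 - θ) * K ^ θ * r ^ (θ * β + (1 - θ) * d)) := by
    rw [ENNReal.mul_rpow_of_ne_zero (mul_ne_zero hK0 (ENNReal.inv_ne_zero.2 hc))
        (by simp [hr0, hr, ENNReal.rpow_eq_zero_iff]),
      ENNReal.mul_rpow_of_ne_zero hK0 (ENNReal.inv_ne_zero.2 hc),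
      ENNReal.mul_rpow_of_ne_zero three_ne_zero hr0, ENNReal.inv_rpow, ← ENNReal.rpow_neg,
      ← ENNReal.rpow_mul, neg_sub, show θ = 1 + (θ - 1) by ring,
      show (1 + (θ - 1)) * β + (1 - (1 + (θ - 1))) * d = β + (β - d) * (θ - 1) by ring,
      ENNReal.rpow_add _ _ hK0 hK, ENNReal.rpow_add _ _ hr0 hr, ENNReal.rpow_one]
    ring_nf
  refine (hg.setLIntegral_ball_maxFun_rpow_le hd hK hβ hθ0 hθ1 x hρ hl0 hl le_rfl).trans_eq ?_
  rw [mul_assoc 2, hsmall, mul_assoc Ckol, hlarge]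
  ring

lemma exists_hasMorreyBound_maxFun_rpow_comp_rpow (hd : 1 ≤ d) {θ₀ θ β : ℝ} (hθ₀0 : 0 < θ₀)
    (hθ₀1 : θ₀ < 1) (hθ0 : 0 < θ) (hθ1 : θ < 1) (hβ : β ≤ d) :
    ∃ C : ℝ≥0∞, C ≠ ∞ ∧ ∀ (f : EuclideanSpace ℝ (Fin d) → ℝ≥0∞) (K : ℝ≥0∞),
      AEMeasurable f → K ≠ ∞ → HasMorreyBound f K β →
        HasMorreyBound (fun y => maxFun (fun z => f z ^ θ₀) y ^ θ) (C * K ^ (θ₀ * θ))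
          (θ * (θ₀ * β + (1 - θ₀) * d) + (1 - θ) * d) := by
  set c := volume (ball (0 : EuclideanSpace ℝ (Fin d)) 1)
  have hc : c ≠ ∞ := measure_ball_lt_top.ne
  obtain ⟨C, hC, hmax⟩ := exists_hasMorreyBound_maxFun_rpow hd hθ0 hθ1
    (β := θ₀ * β + (1 - θ₀) * d) (by nlinarith)
  refine ⟨C * c ^ ((1 - θ₀) * θ), ENNReal.mul_ne_top hC
    (ENNReal.rpow_ne_top_of_nonneg (by nlinarith) hc), fun f K hf hK hfK => ?_⟩
  have hfθ₀ := hfK.rpow hf hθ₀0 hθ₀1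
  convert hmax _ _ (ENNReal.mul_ne_top (ENNReal.rpow_ne_top_of_nonneg hθ₀0.le hK)
    (ENNReal.rpow_ne_top_of_nonneg (by linarith) hc)) hfθ₀ using 1
  rw [ENNReal.mul_rpow_of_nonneg _ _ hθ0.le, ← ENNReal.rpow_mul, ← ENNReal.rpow_mul]
  ring

end Morrey

theorem maximal_morrey_transfer_general
    (d : ℕ) (hd : 1 ≤ d) (α r p : ℝ) (hα0 : 0 < α)
    (hr : 1 < r) (hrp : r < p)
    (p₀ p₁ : ℝ) (hp₀ : p₀ = (r + p) / 2) (hp₁ : p₁ = (r + p₀) / 2) :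
    ∃ N : ℝ, 0 < N ∧
      ∀ b : EuclideanSpace ℝ (Fin d) → ℝ, Measurable b → (∀ x, 0 ≤ b x) →
      ∀ A : ℝ, 0 ≤ A →
      (∀ (x : EuclideanSpace ℝ (Fin d)) (ρ : ℝ), 0 < ρ →
        ∫⁻ y in ball x ρ, ENNReal.ofReal (b y ^ p) ≤
          ENNReal.ofReal (A ^ p * ρ ^ ((d : ℝ) - p * α))) →
      ∀ (x : EuclideanSpace ℝ (Fin d)) (ρ : ℝ), 0 < ρ →
        -- `b̃ ^ p₁ = (𝕄(b^(p₀))) ^ (p₁/p₀)`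
        ∫⁻ y in ball x ρ,
            (maxFun (fun z => ENNReal.ofReal (b z ^ p₀)) y) ^ (p₁ / p₀) ≤
          ENNReal.ofReal (N * ρ ^ ((d : ℝ) - p₁ * α) * A ^ p₁) := by
  have hp : 0 < p := by linarith
  have hp₀0 : 0 < p₀ := by linarith
  obtain ⟨C, hC, hmax⟩ := exists_hasMorreyBound_maxFun_rpow_comp_rpow hd (θ₀ := p₀ / p)
    (θ := p₁ / p₀) (β := d - p * α) (by positivity) ((div_lt_one hp).2 (by linarith))
    (div_pos (by linarith) hp₀0) ((div_lt_one hp₀0).2 (by linarith)) (by nlinarith)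
  refine ⟨C.toReal + 1, by positivity, fun b hb hb0 A hA hMor x ρ hρ => ?_⟩
  have hpow : (fun z => ENNReal.ofReal (b z ^ p) ^ (p₀ / p)) = fun z => ENNReal.ofReal (b z ^ p₀) :=
    funext fun z => by
      rw [ENNReal.ofReal_rpow_of_nonneg (Real.rpow_nonneg (hb0 z) p) (by positivity),
        ← Real.rpow_mul (hb0 z), mul_div_cancel₀ _ hp.ne']
  have key := hmax _ _ (hb.pow_const p).ennreal_ofReal.aemeasurable
    (ENNReal.rpow_ne_top_of_nonneg hp.le ENNReal.ofReal_ne_top)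
    (hasMorreyBound_of_le_ofReal hA hp.le hMor) x ρ hρ
  rw [hpow, ← ENNReal.rpow_mul, show p * (p₀ / p * (p₁ / p₀)) = p₁ by field_simp,
    show p₁ / p₀ * (p₀ / p * (d - p * α) + (1 - p₀ / p) * d) + (1 - p₁ / p₀) * d = d - p₁ * α by
      field_simp; ring] at key
  calc _ ≤ _ := key
    _ ≤ ENNReal.ofReal (C.toReal + 1) * ENNReal.ofReal A ^ p₁ *
          ENNReal.ofReal ρ ^ ((d : ℝ) - p₁ * α) := by
        gcongr
        exact (ENNReal.le_ofReal_iff_toReal_le hC (by positivity)).2 (by linarith)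
    _ = _ := by
        rw [ENNReal.ofReal_mul (by positivity), ENNReal.ofReal_mul (by positivity),
          ENNReal.ofReal_rpow_of_pos hρ, ENNReal.ofReal_rpow_of_nonneg hA (by linarith)]
        ring

/-- **Estimate (0.5).** With `p₀ = (r+p)/2`, `p₁ = (r+p₀)/2` and
`b̃ = (𝕄(b^(p₀)))^(1/p₀)`, the Morrey condition on `b` with exponent `p` implies
`∫_{B_ρ(x)} b̃^(p₁) ≤ N ρ^(d - p₁α) A^(p₁)` with `N = N(α,d,r,p)`. -/
theorem maximal_morrey_transfer
    (d : ℕ) (hd : 1 ≤ d) (α r p : ℝ) (hα0 : 0 < α) (hαd : α < d)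
    (hαr : α ≤ r) (hr : 1 < r) (hrp : r < p) (hpd : p ≤ d)
    (p₀ p₁ : ℝ) (hp₀ : p₀ = (r + p) / 2) (hp₁ : p₁ = (r + p₀) / 2) :
    ∃ N : ℝ, 0 < N ∧
      ∀ b : EuclideanSpace ℝ (Fin d) → ℝ, Measurable b → (∀ x, 0 ≤ b x) →
      ∀ A : ℝ, 0 ≤ A →
      (∀ (x : EuclideanSpace ℝ (Fin d)) (ρ : ℝ), 0 < ρ →
        ∫⁻ y in ball x ρ, ENNReal.ofReal (b y ^ p) ≤
          ENNReal.ofReal (A ^ p * ρ ^ ((d : ℝ) - p * α))) →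
      ∀ (x : EuclideanSpace ℝ (Fin d)) (ρ : ℝ), 0 < ρ →
        -- `b̃ ^ p₁ = (𝕄(b^(p₀))) ^ (p₁/p₀)`
        ∫⁻ y in ball x ρ,
            (maxFun (fun z => ENNReal.ofReal (b z ^ p₀)) y) ^ (p₁ / p₀) ≤
          ENNReal.ofReal (N * ρ ^ ((d : ℝ) - p₁ * α) * A ^ p₁) :=
  maximal_morrey_transfer_general d hd α r p hα0 hr hrp p₀ p₁ hp₀ hp₁
end

section
/- Let d ≥ 1 be an integer, α ∈ (0, d), and let r, p satisfy α ≤ r, 1 < r < p ≤ d. Let γ > 0 satisfy (1+γ)r ≤ p, 1 + γr' ≤ p and r ≥ 1 + γ, where r' = r/(r-1). Let b : ℝ^d → [0,∞) be measurable, f ∈ L^r(ℝ^d) with f ≥ 0, and set v = R_α f. Then ∥R_α(b^r v^{r-1})∥_{L^{r'}(ℝ^d)} ≤ (∫_{ℝ^d} b^{r - γ r'} v^r R_α[(R_α(b^{(1+γ)r}))^{1/(r-1)}] dx)^{(r-1)/r}. -/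
/-!
By duality it suffices to bound `∫ u · R_α h = ∫ h · R_α u` (the Riesz potential is self-adjoint),
where `h = b^r v^(r-1)`, by `I^(1/r') ‖u‖_r` for every test function `u ≥ 0`; here `I` is the
integral on the right-hand side. Hölder's inequality in the inner integral, with the weight
`A = R_α(b^((1+γ)r))`, gives `R_α u ≤ R_α(u^r / A)^(1/r) · R_α(A^(1/(r-1)))^(1/r')`. Splitting
`h = (b^(r-γr') v^r)^(1/r') · (b^((1+γ)r))^(1/r)`, Hölder's inequality in the outer integral bounds
`∫ h R_α u` by `I^(1/r') (∫ b^((1+γ)r) R_α(u^r / A))^(1/r)`, and by self-adjointness again the last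
integral is `∫ (u^r / A) A ≤ ∫ u^r`. The weight is admissible since `A > 0` everywhere unless
`b = 0` a.e., and `I = ∞` as soon as `A = ∞` on a set of positive measure.
-/

open MeasureTheory Metric ENNReal
open scoped FourierTransform

section Duality

variable {X : Type*} [MeasurableSpace X] {μ : Measure X}

theorem ENNReal.rpow_le_of_le_mul_rpow {p q : ℝ} (hpq : p.HolderConjugate q) {J K : ℝ≥0∞}
    (hJ : J ≠ ∞) (h : J ≤ K * J ^ (1 / p)) : J ^ (1 / q) ≤ K := by
  rcases eq_or_ne J 0 with rfl | hJ0
  · rw [ENNReal.zero_rpow_of_pos hpq.symm.one_div_pos]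
    exact zero_le
  have hJp0 : J ^ (1 / p) ≠ 0 := (ENNReal.rpow_pos (pos_iff_ne_zero.2 hJ0) hJ).ne'
  have hJpt : J ^ (1 / p) ≠ ∞ := ENNReal.rpow_ne_top_of_nonneg hpq.one_div_nonneg hJ
  refine (ENNReal.mul_le_mul_iff_left hJp0 hJpt).1 ?_
  rwa [← ENNReal.rpow_add _ _ hJ0 hJ, add_comm, hpq.one_div_add_one_div, div_one,
    ENNReal.rpow_one]

theorem iSup_indicator_spanningSets_min [SigmaFinite μ] (w : X → ℝ≥0∞) (x : X) :
    ⨆ n : ℕ, (spanningSets μ n).indicator (fun y => min (w y) n) x = w x := by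
  refine le_antisymm (iSup_le fun n => ?_) ?_
  · exact Set.indicator_le (fun y _ => min_le_left _ _) x
  obtain ⟨N, hN⟩ := Set.mem_iUnion.1 (iUnion_spanningSets μ ▸ Set.mem_univ x)
  calc w x = ⨆ k : ℕ, min (w x) k := by rw [← inf_iSup_eq, ENNReal.iSup_natCast, inf_top_eq]
    _ ≤ ⨆ n : ℕ, (spanningSets μ n).indicator (fun y => min (w y) n) x := by
      refine iSup_le fun k => le_iSup_of_le (max k N) ?_
      rw [Set.indicator_of_mem (monotone_spanningSets μ (le_max_right k N) hN)]
      exact min_le_min le_rfl (by exact_mod_cast le_max_left k N)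

theorem lintegral_rpow_le_of_le_of_forall_lintegral_mul_le {p q : ℝ}
    (hpq : p.HolderConjugate q) {m w : X → ℝ≥0∞} (hm : Measurable m) (hmw : m ≤ w)
    (hm_fin : ∫⁻ x, m x ^ q ∂μ ≠ ∞) {K : ℝ≥0∞}
    (hK : ∀ u : X → ℝ≥0∞, Measurable u →
      ∫⁻ x, u x * w x ∂μ ≤ K * (∫⁻ x, u x ^ p ∂μ) ^ (1 / p)) :
    ∫⁻ x, m x ^ q ∂μ ≤ K ^ q := by
  -- test against `u = m ^ (q - 1)`, for which `u ^ p = m ^ q` and `m ^ q ≤ u * w`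
  have hu : ∀ x, (m x ^ (q - 1)) ^ p = m x ^ q := fun x => by
    rw [← ENNReal.rpow_mul, hpq.symm.sub_one_mul_conj]
  have hmu : ∀ x, m x ^ q ≤ m x ^ (q - 1) * w x := fun x => by
    calc m x ^ q = m x ^ (q - 1) * m x ^ (1 : ℝ) := by
          rw [← ENNReal.rpow_add_of_nonneg _ _ hpq.symm.sub_one_pos.le zero_le_one,
            sub_add_cancel]
      _ ≤ m x ^ (q - 1) * w x := by
          rw [ENNReal.rpow_one]
          exact mul_le_mul_right (hmw x) _
  have hJK : ∫⁻ x, m x ^ q ∂μ ≤ K * (∫⁻ x, m x ^ q ∂μ) ^ (1 / p) := by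
    calc ∫⁻ x, m x ^ q ∂μ ≤ ∫⁻ x, m x ^ (q - 1) * w x ∂μ := lintegral_mono hmu
      _ ≤ K * (∫⁻ x, (m x ^ (q - 1)) ^ p ∂μ) ^ (1 / p) := hK _ (hm.pow_const _)
      _ = K * (∫⁻ x, m x ^ q ∂μ) ^ (1 / p) := by simp only [hu]
  rw [← ENNReal.rpow_inv_le_iff hpq.symm.pos, ← one_div]
  exact ENNReal.rpow_le_of_le_mul_rpow hpq hm_fin hJK

theorem lintegral_rpow_le_of_forall_lintegral_mul_le [SigmaFinite μ] {p q : ℝ}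
    (hpq : p.HolderConjugate q) {w : X → ℝ≥0∞} (hw : Measurable w) {K : ℝ≥0∞}
    (hK : ∀ u : X → ℝ≥0∞, Measurable u →
      ∫⁻ x, u x * w x ∂μ ≤ K * (∫⁻ x, u x ^ p ∂μ) ^ (1 / p)) :
    (∫⁻ x, w x ^ q ∂μ) ^ (1 / q) ≤ K := by
  set m : ℕ → X → ℝ≥0∞ := fun n => (spanningSets μ n).indicator (fun y => min (w y) n)
  have hm : ∀ n, Measurable (m n) := fun n =>
    (hw.min measurable_const).indicator (measurableSet_spanningSets μ n)
  have hm_mono : Monotone m := fun n n' hnn' x => by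
    by_cases hx : x ∈ spanningSets μ n
    · simp only [m, Set.indicator_of_mem hx,
        Set.indicator_of_mem (monotone_spanningSets μ hnn' hx)]
      exact min_le_min le_rfl (by exact_mod_cast hnn')
    · simp only [m, Set.indicator_of_notMem hx]
      exact zero_le
  have hm_fin : ∀ n, ∫⁻ x, m n x ^ q ∂μ ≠ ∞ := fun n => by
    have hle : ∀ x, m n x ^ q ≤ (spanningSets μ n).indicator (fun _ => (n : ℝ≥0∞) ^ q) x := by
      intro x
      by_cases hx : x ∈ spanningSets μ n
      · simp only [m, Set.indicator_of_mem hx]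
        exact ENNReal.rpow_le_rpow (min_le_right _ _) hpq.symm.nonneg
      · simp [m, hx, ENNReal.zero_rpow_of_pos hpq.symm.pos]
    refine ne_top_of_le_ne_top ?_ (lintegral_mono hle)
    rw [lintegral_indicator_const (measurableSet_spanningSets μ n)]
    exact ENNReal.mul_ne_top (by simp [hpq.symm.nonneg]) (measure_spanningSets_lt_top μ n).ne
  have hm_le : ∀ n, m n ≤ w := fun n x =>
    (le_iSup (fun k => m k x) n).trans_eq (iSup_indicator_spanningSets_min w x)
  rw [one_div, ENNReal.rpow_inv_le_iff hpq.symm.pos]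
  calc ∫⁻ x, w x ^ q ∂μ = ∫⁻ x, ⨆ n, m n x ^ q ∂μ := by
        refine lintegral_congr fun x => ?_
        rw [← iSup_indicator_spanningSets_min (μ := μ) w x]
        exact (ENNReal.orderIsoRpow q hpq.symm.pos).map_iSup _
    _ = ⨆ n, ∫⁻ x, m n x ^ q ∂μ := lintegral_iSup (fun n => (hm n).pow_const _)
          fun n n' hnn' x => ENNReal.rpow_le_rpow (hm_mono hnn' x) hpq.symm.nonneg
    _ ≤ K ^ q := iSup_le fun n =>
          lintegral_rpow_le_of_le_of_forall_lintegral_mul_le hpq (hm n) (hm_le n) (hm_fin n) hK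

end Duality

section WeightedHolder

variable {X : Type*} [MeasurableSpace X] {ν : Measure X} {p q : ℝ}

theorem lintegral_le_weighted_Lp_mul_Lq (hpq : p.HolderConjugate q) {u A : X → ℝ≥0∞}
    (hu : AEMeasurable u ν) (hA : AEMeasurable A ν) (hA' : ∀ᵐ z ∂ν, A z ≠ 0 ∧ A z ≠ ∞) :
    ∫⁻ z, u z ∂ν ≤
      (∫⁻ z, u z ^ p / A z ∂ν) ^ (1 / p) * (∫⁻ z, A z ^ (1 / (p - 1)) ∂ν) ^ (1 / q) := by
  have hexp : 1 / (p - 1) * (1 / q) = 1 / p := by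
    rw [hpq.conjugate_eq]; field_simp [hpq.sub_one_ne_zero, hpq.ne_zero]
  refine (lintegral_mono_ae ?_).trans <| ENNReal.lintegral_mul_norm_pow_le
    (f := fun z => u z ^ p / A z) (by fun_prop) (hA.pow_const _) hpq.one_div_nonneg
    hpq.symm.one_div_nonneg (by rw [hpq.one_div_add_one_div, div_one])
  filter_upwards [hA'] with z ⟨hA0, hAt⟩
  rw [← ENNReal.rpow_mul, hexp, ← ENNReal.mul_rpow_of_nonneg _ _ hpq.one_div_nonneg,
    ENNReal.div_mul_cancel hA0 hAt, ← ENNReal.rpow_mul, mul_one_div_cancel hpq.ne_zero,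
    ENNReal.rpow_one]

end WeightedHolder

section Riesz

variable {d : ℕ} {α : ℝ}

noncomputable def rieszKernel (d : ℕ) (α : ℝ) (y : EuclideanSpace ℝ (Fin d)) : ℝ≥0∞ :=
  ENNReal.ofReal (‖y‖ ^ (α - (d : ℝ)))

@[fun_prop]
theorem measurable_rieszKernel : Measurable (rieszKernel d α) := by
  unfold rieszKernel; fun_prop

theorem rieszKernel_sub_comm (x y : EuclideanSpace ℝ (Fin d)) :
    rieszKernel d α (x - y) = rieszKernel d α (y - x) := by
  rw [rieszKernel, rieszKernel, norm_sub_rev]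

theorem ae_rieszKernel_sub_ne_zero
    [NullSingletonClass (volume : Measure (EuclideanSpace ℝ (Fin d)))]
    (x : EuclideanSpace ℝ (Fin d)) : ∀ᵐ y, rieszKernel d α (y - x) ≠ 0 := by
  filter_upwards [Measure.ae_ne volume x] with y hy
  simpa [rieszKernel] using Real.rpow_pos_of_pos (norm_pos_iff.2 (sub_ne_zero.2 hy)) _

theorem riesz_eq_lintegral_mul_rieszKernel (g : EuclideanSpace ℝ (Fin d) → ℝ≥0∞)
    (x : EuclideanSpace ℝ (Fin d)) :
    riesz α g x = ∫⁻ y, g y * rieszKernel d α (y - x) := by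
  rw [riesz, ← lintegral_add_left_eq_self (fun y => g y * rieszKernel d α (y - x)) x]
  simp [rieszKernel]

theorem riesz_eq_lintegral_withDensity {g : EuclideanSpace ℝ (Fin d) → ℝ≥0∞}
    (hg : AEMeasurable g) (x : EuclideanSpace ℝ (Fin d)) :
    riesz α g x = ∫⁻ y, g y ∂volume.withDensity fun y => rieszKernel d α (y - x) := by
  rw [riesz_eq_lintegral_mul_rieszKernel, lintegral_withDensity_eq_lintegral_mul₀ (by fun_prop) hg]
  simp only [Pi.mul_apply, mul_comm]

theorem riesz_congr_ae {g g' : EuclideanSpace ℝ (Fin d) → ℝ≥0∞} (h : g =ᵐ[volume] g') :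
    riesz α g = riesz α g' := by
  ext x
  simp only [riesz_eq_lintegral_mul_rieszKernel]
  exact lintegral_congr_ae (h.mono fun y hy => by simp only [hy])

theorem measurable_riesz {g : EuclideanSpace ℝ (Fin d) → ℝ≥0∞} (hg : AEMeasurable g) :
    Measurable (riesz α g) := by
  rw [riesz_congr_ae hg.ae_eq_mk]
  simp only [funext (riesz_eq_lintegral_mul_rieszKernel _)]
  have := hg.measurable_mk
  exact Measurable.lintegral_prod_right' (f := fun z => hg.mk g z.2 * rieszKernel d α (z.2 - z.1))
    (by fun_prop)

theorem lintegral_mul_riesz_comm {g h : EuclideanSpace ℝ (Fin d) → ℝ≥0∞}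
    (hg : Measurable g) (hh : Measurable h) :
    ∫⁻ x, g x * riesz α h x = ∫⁻ x, h x * riesz α g x := by
  have hiter : ∀ {k l : EuclideanSpace ℝ (Fin d) → ℝ≥0∞}, Measurable l →
      ∫⁻ x, k x * riesz α l x = ∫⁻ x, ∫⁻ y, k x * (l y * rieszKernel d α (y - x)) :=
    fun hl => lintegral_congr fun x => by
      rw [riesz_eq_lintegral_mul_rieszKernel, lintegral_const_mul _ (by fun_prop)]
  rw [hiter hh, hiter hg, lintegral_lintegral_swap (by fun_prop)]
  refine lintegral_congr fun y => lintegral_congr fun x => ?_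
  rw [rieszKernel_sub_comm]
  ring

theorem riesz_ne_zero [NullSingletonClass (volume : Measure (EuclideanSpace ℝ (Fin d)))]
    {g : EuclideanSpace ℝ (Fin d) → ℝ≥0∞} (hg : AEMeasurable g) (hg0 : ¬g =ᵐ[volume] 0)
    (x : EuclideanSpace ℝ (Fin d)) : riesz α g x ≠ 0 := by
  rw [riesz_eq_lintegral_mul_rieszKernel, Ne, lintegral_eq_zero_iff' (by fun_prop)]
  refine fun h => hg0 ?_
  filter_upwards [h, ae_rieszKernel_sub_ne_zero x] with y hy hK
  exact (mul_eq_zero.1 hy).resolve_right hK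

theorem riesz_eq_top [NullSingletonClass (volume : Measure (EuclideanSpace ℝ (Fin d)))]
    {g : EuclideanSpace ℝ (Fin d) → ℝ≥0∞} (hg : AEMeasurable g) (hgt : ¬∀ᵐ y, g y ≠ ∞)
    (x : EuclideanSpace ℝ (Fin d)) : riesz α g x = ∞ := by
  rw [riesz_eq_lintegral_mul_rieszKernel]
  refine lintegral_eq_top_of_measure_eq_top_ne_zero (by fun_prop) fun h => hgt ?_
  rw [ae_iff]
  refine measure_mono_null_ae ?_ h
  filter_upwards [ae_rieszKernel_sub_ne_zero (α := α) x] with y hK (hy : ¬g y ≠ ∞)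
  exact show g y * _ = ∞ by rw [not_ne_iff.1 hy, ENNReal.top_mul hK]

theorem riesz_le_weighted_holder {p q : ℝ} (hpq : p.HolderConjugate q)
    {u A : EuclideanSpace ℝ (Fin d) → ℝ≥0∞} (hu : AEMeasurable u) (hA : AEMeasurable A)
    (hA' : ∀ᵐ z, A z ≠ 0 ∧ A z ≠ ∞) (x : EuclideanSpace ℝ (Fin d)) :
    riesz α u x ≤ riesz α (fun z => u z ^ p / A z) x ^ (1 / p) *
      riesz α (fun z => A z ^ (1 / (p - 1))) x ^ (1 / q) := by
  have hac := withDensity_absolutelyContinuous volume fun y => rieszKernel d α (y - x)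
  rw [riesz_eq_lintegral_withDensity hu, riesz_eq_lintegral_withDensity (by fun_prop),
    riesz_eq_lintegral_withDensity (by fun_prop)]
  exact lintegral_le_weighted_Lp_mul_Lq hpq (hu.mono_ac hac) (hA.mono_ac hac) (hac.ae_le hA')

end Riesz

section DualityEstimate

variable {d : ℕ} {α p q : ℝ}

theorem lintegral_mul_riesz_le_of_ae_ne (hpq : p.HolderConjugate q)
    {φ a u : EuclideanSpace ℝ (Fin d) → ℝ≥0∞} (hφ : Measurable φ) (ha : Measurable a)
    (hu : Measurable u) (hA : ∀ᵐ z, riesz α a z ≠ 0 ∧ riesz α a z ≠ ∞) :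
    ∫⁻ x, φ x ^ (1 / q) * a x ^ (1 / p) * riesz α u x ≤
      (∫⁻ x, φ x * riesz α (fun y => riesz α a y ^ (1 / (p - 1))) x) ^ (1 / q) *
        (∫⁻ x, u x ^ p) ^ (1 / p) := by
  set A := riesz α a
  set C := riesz α (fun y => A y ^ (1 / (p - 1)))
  have hAm : Measurable A := measurable_riesz ha.aemeasurable
  have hCm : Measurable C := measurable_riesz (by fun_prop)
  have hw : Measurable fun z => u z ^ p / A z := by fun_prop
  have hRw : Measurable (riesz α fun z => u z ^ p / A z) := measurable_riesz hw.aemeasurable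
  have hpt : ∀ x, φ x ^ (1 / q) * a x ^ (1 / p) * riesz α u x ≤
      (φ x * C x) ^ (1 / q) * (a x * riesz α (fun z => u z ^ p / A z) x) ^ (1 / p) := fun x => by
    calc _ ≤ φ x ^ (1 / q) * a x ^ (1 / p) *
          (riesz α (fun z => u z ^ p / A z) x ^ (1 / p) * C x ^ (1 / q)) := by
          gcongr
          exact riesz_le_weighted_holder hpq hu.aemeasurable hAm.aemeasurable hA x
      _ = _ := by
          rw [ENNReal.mul_rpow_of_nonneg _ _ hpq.symm.one_div_nonneg,
            ENNReal.mul_rpow_of_nonneg _ _ hpq.one_div_nonneg]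
          ring
  calc _ ≤ ∫⁻ x, (φ x * C x) ^ (1 / q) *
          (a x * riesz α (fun z => u z ^ p / A z) x) ^ (1 / p) := lintegral_mono hpt
    _ ≤ (∫⁻ x, φ x * C x) ^ (1 / q) *
          (∫⁻ x, a x * riesz α (fun z => u z ^ p / A z) x) ^ (1 / p) :=
        ENNReal.lintegral_mul_norm_pow_le (by fun_prop) (by fun_prop) hpq.symm.one_div_nonneg
          hpq.one_div_nonneg (by rw [add_comm, hpq.one_div_add_one_div, div_one])
    _ ≤ _ := by
        refine mul_le_mul_right (ENNReal.rpow_le_rpow ?_ hpq.one_div_nonneg) _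
        calc ∫⁻ x, a x * riesz α (fun z => u z ^ p / A z) x = ∫⁻ z, u z ^ p / A z * A z :=
              lintegral_mul_riesz_comm ha hw
          _ ≤ ∫⁻ z, u z ^ p := lintegral_mono fun z => by
              rw [div_eq_mul_inv, mul_assoc]
              exact mul_le_of_le_one_right' (ENNReal.inv_mul_le_one _)

theorem lintegral_mul_riesz_le [NullSingletonClass (volume : Measure (EuclideanSpace ℝ (Fin d)))]
    (hpq : p.HolderConjugate q)
    {φ a u : EuclideanSpace ℝ (Fin d) → ℝ≥0∞} (hφ : Measurable φ) (ha : Measurable a)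
    (hu : Measurable u) :
    ∫⁻ x, φ x ^ (1 / q) * a x ^ (1 / p) * riesz α u x ≤
      (∫⁻ x, φ x * riesz α (fun y => riesz α a y ^ (1 / (p - 1))) x) ^ (1 / q) *
        (∫⁻ x, u x ^ p) ^ (1 / p) := by
  by_cases hdeg : φ =ᵐ[volume] 0 ∨ a =ᵐ[volume] 0 ∨ u =ᵐ[volume] 0
  · have hzero : (fun x => φ x ^ (1 / q) * a x ^ (1 / p) * riesz α u x) =ᵐ[volume] 0 := by
      rcases hdeg with h | h | h
      · filter_upwards [h] with x hx
        simp [hx, hpq.symm.pos]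
      · filter_upwards [h] with x hx
        simp [hx, hpq.pos]
      · rw [riesz_congr_ae h]
        exact ae_of_all _ fun x => by simp [riesz]
    rw [lintegral_congr_ae hzero]
    simp
  simp only [not_or] at hdeg
  obtain ⟨hφ0, ha0, hu0⟩ := hdeg
  by_cases hAt : ∀ᵐ z, riesz α a z ≠ ∞
  · exact lintegral_mul_riesz_le_of_ae_ne hpq hφ ha hu
      (hAt.mono fun z hz => ⟨riesz_ne_zero ha.aemeasurable ha0 z, hz⟩)
  -- otherwise the right-hand side is infinite
  have hC : ∀ x, riesz α (fun y => riesz α a y ^ (1 / (p - 1))) x = ∞ :=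
    riesz_eq_top ((measurable_riesz ha.aemeasurable).pow_const _).aemeasurable fun h =>
      hAt (h.mono fun z hz => by
        rwa [Ne, ENNReal.rpow_eq_top_iff_of_pos (one_div_pos.2 hpq.sub_one_pos)] at hz)
  have hφC : ∫⁻ x, φ x * ∞ = ∞ := by
    rw [lintegral_mul_const _ hφ, ENNReal.mul_top ((lintegral_eq_zero_iff hφ).not.2 hφ0)]
  have hup : ∫⁻ x, u x ^ p ≠ 0 := by
    rw [Ne, lintegral_eq_zero_iff (hu.pow_const p)]
    refine fun h => hu0 (h.mono fun x hx => ?_)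
    simpa [hpq.pos, hpq.pos.not_gt] using hx
  simp only [hC, hφC, ENNReal.top_rpow_of_pos hpq.symm.one_div_pos]
  rw [ENNReal.top_mul (ENNReal.rpow_pos_of_nonneg (pos_iff_ne_zero.2 hup) hpq.one_div_nonneg).ne']
  exact le_top

end DualityEstimate

theorem ofReal_rpow_mul_rpow_sub_one_eq {p q : ℝ} (hpq : p.HolderConjugate q) (γ : ℝ) {b : ℝ}
    (hb : 0 ≤ b) (v : ℝ≥0∞) :
    ENNReal.ofReal (b ^ p) * v ^ (p - 1) =
      (ENNReal.ofReal (b ^ (p - γ * q)) * v ^ p) ^ (1 / q) *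
        ENNReal.ofReal (b ^ ((1 + γ) * p)) ^ (1 / p) := by
  have hexp : (p - γ * q) * (1 / q) + (1 + γ) * p * (1 / p) = p := by
    have := hpq.div_conj_eq_sub_one
    field_simp [hpq.ne_zero, hpq.symm.ne_zero] at this ⊢
    linarith
  rw [ENNReal.mul_rpow_of_nonneg _ _ hpq.symm.one_div_nonneg, ← ENNReal.rpow_mul,
    ENNReal.ofReal_rpow_of_nonneg (by positivity) hpq.symm.one_div_nonneg,
    ENNReal.ofReal_rpow_of_nonneg (by positivity) hpq.one_div_nonneg, ← Real.rpow_mul hb,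
    ← Real.rpow_mul hb, mul_one_div p q, hpq.div_conj_eq_sub_one, mul_right_comm,
    ← ENNReal.ofReal_mul (by positivity), ← Real.rpow_add' hb (by rw [hexp]; exact hpq.ne_zero),
    hexp]

theorem riesz_dual_norm_bound_general
    (d : ℕ) (hd : 1 ≤ d) (α r : ℝ) (hr : 1 < r)
    (γ r' : ℝ) (hr' : r' = r / (r - 1))
    (b : EuclideanSpace ℝ (Fin d) → ℝ) (hbm : Measurable b) (hb0 : ∀ x, 0 ≤ b x)
    (f : EuclideanSpace ℝ (Fin d) → ℝ) (hf : MemLp f (ENNReal.ofReal r) volume) :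
    (∫⁻ x, (riesz α (fun y => ENNReal.ofReal (b y ^ r) *
        (riesz α (fun z => ENNReal.ofReal (f z)) y) ^ (r - 1)) x) ^ r') ^ (1 / r') ≤
      (∫⁻ x, ENNReal.ofReal (b x ^ (r - γ * r')) *
          (riesz α (fun z => ENNReal.ofReal (f z)) x) ^ r *
          riesz α (fun y =>
            (riesz α (fun z => ENNReal.ofReal (b z ^ ((1 + γ) * r))) y) ^
              (1 / (r - 1))) x) ^ ((r - 1) / r) := by
  have hrr' : r.HolderConjugate r' := (Real.holderConjugate_iff_eq_conjExponent hr).2 hr'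
  have : NeZero d := ⟨by omega⟩
  set v := riesz α fun z => ENNReal.ofReal (f z)
  have hv : Measurable v := measurable_riesz hf.aestronglyMeasurable.aemeasurable.ennreal_ofReal
  have hh : Measurable fun y => ENNReal.ofReal (b y ^ r) * v y ^ (r - 1) := by fun_prop
  rw [show (r - 1) / r = 1 / r' by rw [hr', one_div_div]]
  refine lintegral_rpow_le_of_forall_lintegral_mul_le hrr' (measurable_riesz hh.aemeasurable)
    fun u hu => ?_
  calc ∫⁻ x, u x * riesz α (fun y => ENNReal.ofReal (b y ^ r) * v y ^ (r - 1)) x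
      = ∫⁻ x, ENNReal.ofReal (b x ^ r) * v x ^ (r - 1) * riesz α u x :=
        lintegral_mul_riesz_comm hu hh
    _ = ∫⁻ x, (ENNReal.ofReal (b x ^ (r - γ * r')) * v x ^ r) ^ (1 / r') *
          ENNReal.ofReal (b x ^ ((1 + γ) * r)) ^ (1 / r) * riesz α u x := by
        simp only [ofReal_rpow_mul_rpow_sub_one_eq hrr' γ (hb0 _)]
    _ ≤ _ := lintegral_mul_riesz_le hrr' (by fun_prop) (by fun_prop) hu

/-- The Hölder-type estimate for `∥R_α(b^r v^(r-1))∥_{L^{r'}}` with `v = R_α f`: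
`∥R_α(b^r v^(r-1))∥_{L^{r'}} ≤
  (∫ b^(r-γr') v^r R_α[(R_α(b^((1+γ)r)))^(1/(r-1))])^((r-1)/r)`. -/
theorem riesz_dual_norm_bound
    (d : ℕ) (hd : 1 ≤ d) (α r p : ℝ) (hα0 : 0 < α) (hαd : α < d)
    (hαr : α ≤ r) (hr : 1 < r) (hrp : r < p) (hpd : p ≤ d)
    (γ r' : ℝ) (hγ : 0 < γ) (hr' : r' = r / (r - 1))
    (hγ1 : (1 + γ) * r ≤ p) (hγ2 : 1 + γ * r' ≤ p) (hγ3 : 1 + γ ≤ r)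
    (b : EuclideanSpace ℝ (Fin d) → ℝ) (hbm : Measurable b) (hb0 : ∀ x, 0 ≤ b x)
    (f : EuclideanSpace ℝ (Fin d) → ℝ) (hf : MemLp f (ENNReal.ofReal r) volume)
    (hf0 : ∀ x, 0 ≤ f x) :
    (∫⁻ x, (riesz α (fun y => ENNReal.ofReal (b y ^ r) *
        (riesz α (fun z => ENNReal.ofReal (f z)) y) ^ (r - 1)) x) ^ r') ^ (1 / r') ≤
      (∫⁻ x, ENNReal.ofReal (b x ^ (r - γ * r')) *
          (riesz α (fun z => ENNReal.ofReal (f z)) x) ^ r *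
          riesz α (fun y =>
            (riesz α (fun z => ENNReal.ofReal (b z ^ ((1 + γ) * r))) y) ^
              (1 / (r - 1))) x) ^ ((r - 1) / r) :=
  riesz_dual_norm_bound_general d hd α r hr γ r' hr' b hbm hb0 f hf
end
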